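/- arXiv:2308.15870 — 10 statements merged into one kernel-verified Lean document; each statement's English description precedes it below -/
import Mathlib

section
/- Let a be a constant. The answer sets of the common core program CC(a) are exactly the four sets A1(a), A2(a), A3(a), A4(a). (Proposition 2 of the paper: the rules (1)–(9) together with the fact act(a) allow for all and only the maximal consistent sets of deontic predicates as answer sets.) -/
namespace ASP

/-- Atoms: the predicates of the common core applied to a constant. -/
inductive Atom (C : Type) where
  | act : C → Atom C
  | O : C → Atom C
  | F : C → Atom C
  | Do : C → Atom C
  | Dia : C → Atom C
  | Happens : C → Atom C
  | Location : C → Atom C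
  deriving DecidableEq

/-- A literal is an atom or its strong negation. -/
inductive Lit (C : Type) where
  | pos : Atom C → Lit C
  | neg : Atom C → Lit C
  deriving DecidableEq

/-- A ground rule: head, positive body, default-negated body. -/
structure Rule (C : Type) where
  head : Set (Lit C)
  pos : Set (Lit C)
  neg : Set (Lit C)

variable {C : Type}

/-- S satisfies the body of r: pos(r) ⊆ S and neg(r) ∩ S = ∅. -/
def SatBody (S : Set (Lit C)) (r : Rule C) : Prop :=
  r.pos ⊆ S ∧ r.neg ∩ S = ∅

/-- S satisfies the head of r: H(r) ∩ S ≠ ∅. -/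
def SatHead (S : Set (Lit C)) (r : Rule C) : Prop :=
  (r.head ∩ S).Nonempty

/-- S satisfies a rule r: if S satisfies the body then S satisfies the head. -/
def Satisfies (S : Set (Lit C)) (r : Rule C) : Prop :=
  SatBody S r → SatHead S r

/-- A set of literals is consistent if it contains no atom together with
its strong negation. -/
def Consistent (S : Set (Lit C)) : Prop :=
  ∀ p : Atom C, ¬ (Lit.pos p ∈ S ∧ Lit.neg p ∈ S)

/-- The reduct Π(S): the rules of Π whose body is satisfied by S. -/
def reduct (P : Set (Rule C)) (S : Set (Lit C)) : Set (Rule C) :=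
  {r ∈ P | SatBody S r}

/-- S is an answer set of Π iff S is consistent, S satisfies the head of every
rule in the reduct Π(S), and no proper subset of S satisfies every rule of Π(S). -/
def IsAnswerSet (P : Set (Rule C)) (S : Set (Lit C)) : Prop :=
  Consistent S ∧ (∀ r ∈ reduct P S, SatHead S r) ∧
    ∀ S' : Set (Lit C), S' ⊂ S → ¬ (∀ r ∈ reduct P S, Satisfies S' r)

/-- The common core program CC(a): the fact act(a) and rules (1)–(9). -/
def CC (a : C) : Set (Rule C) :=
  { ⟨{.pos (.act a)}, ∅, ∅⟩,                                      -- fact act(a)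
    ⟨{.pos (.O a), .neg (.O a)}, {.pos (.act a)}, ∅⟩,             -- (1)
    ⟨{.pos (.F a), .neg (.F a)}, {.pos (.act a)}, ∅⟩,             -- (2)
    ⟨∅, {.pos (.O a), .neg (.Dia a)}, ∅⟩,                         -- (3)
    ⟨{.neg (.Dia a)}, {.neg (.Do a), .pos (.act a)}, ∅⟩,          -- (4)
    ⟨∅, {.pos (.O a), .pos (.F a)}, ∅⟩,                           -- (5)
    ⟨{.pos (.Do a), .neg (.Do a)}, {.pos (.act a)}, ∅⟩,           -- (6)
    ⟨∅, {.pos (.F a), .pos (.Do a)}, ∅⟩,                          -- (7)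
    ⟨{.pos (.Happens a)}, {.pos (.Do a)}, ∅⟩,                     -- (8)
    ⟨∅, {.pos (.Do a), .neg (.Dia a)}, ∅⟩ }                       -- (9)

def A1 (a : C) : Set (Lit C) :=
  {.pos (.act a), .pos (.O a), .neg (.F a), .pos (.Do a), .pos (.Happens a)}

def A2 (a : C) : Set (Lit C) :=
  {.pos (.act a), .pos (.F a), .neg (.O a), .neg (.Do a), .neg (.Dia a)}

def A3 (a : C) : Set (Lit C) :=
  {.pos (.act a), .neg (.F a), .neg (.O a), .neg (.Do a), .neg (.Dia a)}

def A4 (a : C) : Set (Lit C) :=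
  {.pos (.act a), .neg (.F a), .neg (.O a), .pos (.Do a), .pos (.Happens a)}

/-- A weak constraint: body (pos, neg), weight w and level l. -/
structure WeakConstraint (C : Type) where
  pos : Finset (Lit C)
  neg : Finset (Lit C)
  w : ℕ
  l : ℕ
  deriving DecidableEq

/-- S violates a weak constraint c iff pos(c) ⊆ S and neg(c) ∩ S = ∅. -/
def Violates (S : Set (Lit C)) (c : WeakConstraint C) : Prop :=
  ↑c.pos ⊆ S ∧ ↑c.neg ∩ S = ∅

open Classical in
/-- The penalty of S at level lvl: the sum of the weights of the violated
weak constraints of level lvl. -/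
noncomputable def penalty (W : Finset (WeakConstraint C)) (S : Set (Lit C))
    (lvl : ℕ) : ℕ :=
  ∑ c ∈ W, if c.l = lvl ∧ Violates S c then c.w else 0

/-- S is an optimal answer set of Π w.r.t. W iff S is an answer set of Π and
there is no answer set S' of Π and level lvl with strictly smaller penalty at
lvl and equal penalties at all higher levels. -/
def IsOptimalAnswerSet (P : Set (Rule C)) (W : Finset (WeakConstraint C))
    (S : Set (Lit C)) : Prop :=
  IsAnswerSet P S ∧
    ¬ ∃ (S' : Set (Lit C)) (lvl : ℕ), IsAnswerSet P S' ∧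
        penalty W S' lvl < penalty W S lvl ∧
        ∀ l', lvl < l' → penalty W S' l' = penalty W S l'

variable [DecidableEq C]

/-- WC(a): the weak constraints ':~ O(a) [1:1]' and ':~ F(a) [1:1]'. -/
def WC (a : C) : Finset (WeakConstraint C) :=
  { ⟨{.pos (.O a)}, ∅, 1, 1⟩, ⟨{.pos (.F a)}, ∅, 1, 1⟩ }


section Aux
variable {C : Type} (a : C)

def R0 : Rule C := ⟨{.pos (.act a)}, ∅, ∅⟩
def R1 : Rule C := ⟨{.pos (.O a), .neg (.O a)}, {.pos (.act a)}, ∅⟩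
def R2 : Rule C := ⟨{.pos (.F a), .neg (.F a)}, {.pos (.act a)}, ∅⟩
def R3 : Rule C := ⟨∅, {.pos (.O a), .neg (.Dia a)}, ∅⟩
def R4 : Rule C := ⟨{.neg (.Dia a)}, {.neg (.Do a), .pos (.act a)}, ∅⟩
def R5 : Rule C := ⟨∅, {.pos (.O a), .pos (.F a)}, ∅⟩
def R6 : Rule C := ⟨{.pos (.Do a), .neg (.Do a)}, {.pos (.act a)}, ∅⟩
def R7 : Rule C := ⟨∅, {.pos (.F a), .pos (.Do a)}, ∅⟩
def R8 : Rule C := ⟨{.pos (.Happens a)}, {.pos (.Do a)}, ∅⟩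
def R9 : Rule C := ⟨∅, {.pos (.Do a), .neg (.Dia a)}, ∅⟩

lemma CC_eq : CC a = {R0 a, R1 a, R2 a, R3 a, R4 a, R5 a, R6 a, R7 a, R8 a, R9 a} := rfl

lemma satBody_iff (S : Set (Lit C)) (H P : Set (Lit C)) :
    SatBody S ⟨H, P, ∅⟩ ↔ P ⊆ S := by simp [SatBody]

lemma A1_sat : ∀ r ∈ CC a, Satisfies (A1 a) r := by
  intro r hr
  simp only [CC_eq, Set.mem_insert_iff, Set.mem_singleton_iff] at hr
  rcases hr with rfl|rfl|rfl|rfl|rfl|rfl|rfl|rfl|rfl|rfl <;>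
    simp [Satisfies, SatBody, SatHead, A1, R0, R1, R2, R3, R4, R5, R6, R7, R8, R9,
      Set.subset_def, Set.inter_nonempty, Set.eq_empty_iff_forall_notMem]

lemma A2_sat : ∀ r ∈ CC a, Satisfies (A2 a) r := by
  intro r hr
  simp only [CC_eq, Set.mem_insert_iff, Set.mem_singleton_iff] at hr
  rcases hr with rfl|rfl|rfl|rfl|rfl|rfl|rfl|rfl|rfl|rfl <;>
    simp [Satisfies, SatBody, SatHead, A2, R0, R1, R2, R3, R4, R5, R6, R7, R8, R9,
      Set.subset_def, Set.inter_nonempty, Set.eq_empty_iff_forall_notMem]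

lemma A3_sat : ∀ r ∈ CC a, Satisfies (A3 a) r := by
  intro r hr
  simp only [CC_eq, Set.mem_insert_iff, Set.mem_singleton_iff] at hr
  rcases hr with rfl|rfl|rfl|rfl|rfl|rfl|rfl|rfl|rfl|rfl <;>
    simp [Satisfies, SatBody, SatHead, A3, R0, R1, R2, R3, R4, R5, R6, R7, R8, R9,
      Set.subset_def, Set.inter_nonempty, Set.eq_empty_iff_forall_notMem]

lemma A4_sat : ∀ r ∈ CC a, Satisfies (A4 a) r := by
  intro r hr
  simp only [CC_eq, Set.mem_insert_iff, Set.mem_singleton_iff] at hr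
  rcases hr with rfl|rfl|rfl|rfl|rfl|rfl|rfl|rfl|rfl|rfl <;>
    simp [Satisfies, SatBody, SatHead, A4, R0, R1, R2, R3, R4, R5, R6, R7, R8, R9,
      Set.subset_def, Set.inter_nonempty, Set.eq_empty_iff_forall_notMem]

/-- Forward direction: any answer set contains one of the four candidate sets. -/
lemma answer_superset {S : Set (Lit C)} (h : IsAnswerSet (CC a) S) :
    A1 a ⊆ S ∨ A2 a ⊆ S ∨ A3 a ⊆ S ∨ A4 a ⊆ S := by
  obtain ⟨hcons, hhead, -⟩ := h
  have hact : Lit.pos (Atom.act a) ∈ S := by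
    have := hhead (R0 a) ⟨by simp [CC_eq], by simp [R0, satBody_iff]⟩
    simpa [SatHead, R0, Set.inter_nonempty] using this
  have hO : Lit.pos (Atom.O a) ∈ S ∨ Lit.neg (Atom.O a) ∈ S := by
    have := hhead (R1 a) ⟨by simp [CC_eq], by simp [R1, satBody_iff, Set.subset_def, hact]⟩
    simpa [SatHead, R1, Set.inter_nonempty] using this
  have hF : Lit.pos (Atom.F a) ∈ S ∨ Lit.neg (Atom.F a) ∈ S := by
    have := hhead (R2 a) ⟨by simp [CC_eq], by simp [R2, satBody_iff, Set.subset_def, hact]⟩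
    simpa [SatHead, R2, Set.inter_nonempty] using this
  have hDo : Lit.pos (Atom.Do a) ∈ S ∨ Lit.neg (Atom.Do a) ∈ S := by
    have := hhead (R6 a) ⟨by simp [CC_eq], by simp [R6, satBody_iff, Set.subset_def, hact]⟩
    simpa [SatHead, R6, Set.inter_nonempty] using this
  have h3 : ¬(Lit.pos (Atom.O a) ∈ S ∧ Lit.neg (Atom.Dia a) ∈ S) := by
    rintro ⟨h1, h2⟩
    have := hhead (R3 a) ⟨by simp [CC_eq], by simp [R3, satBody_iff, Set.subset_def, h1, h2]⟩
    simpa [SatHead, R3] using this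
  have h7 : ¬(Lit.pos (Atom.F a) ∈ S ∧ Lit.pos (Atom.Do a) ∈ S) := by
    rintro ⟨h1, h2⟩
    have := hhead (R7 a) ⟨by simp [CC_eq], by simp [R7, satBody_iff, Set.subset_def, h1, h2]⟩
    simpa [SatHead, R7] using this
  have h9 : ¬(Lit.pos (Atom.Do a) ∈ S ∧ Lit.neg (Atom.Dia a) ∈ S) := by
    rintro ⟨h1, h2⟩
    have := hhead (R9 a) ⟨by simp [CC_eq], by simp [R9, satBody_iff, Set.subset_def, h1, h2]⟩
    simpa [SatHead, R9] using this
  rcases hDo with hDo | hnDo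
  · -- Do ∈ S : get Happens, ¬F, then O or ¬O
    have hH : Lit.pos (Atom.Happens a) ∈ S := by
      have := hhead (R8 a) ⟨by simp [CC_eq], by simp [R8, satBody_iff, Set.subset_def, hDo]⟩
      simpa [SatHead, R8, Set.inter_nonempty] using this
    have hnF : Lit.neg (Atom.F a) ∈ S := by
      rcases hF with hF | hF
      · exact absurd ⟨hF, hDo⟩ h7
      · exact hF
    rcases hO with hO | hO
    · left; simp [A1, Set.insert_subset_iff, hact, hO, hnF, hDo, hH]
    · right; right; right; simp [A4, Set.insert_subset_iff, hact, hO, hnF, hDo, hH]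
  · -- ¬Do ∈ S
    have hDonot : Lit.pos (Atom.Do a) ∉ S := fun h => hcons (Atom.Do a) ⟨h, hnDo⟩
    have hnDia : Lit.neg (Atom.Dia a) ∈ S := by
      have := hhead (R4 a) ⟨by simp [CC_eq],
        by simp [R4, satBody_iff, Set.subset_def, hnDo, hact]⟩
      simpa [SatHead, R4, Set.inter_nonempty] using this
    have hnO : Lit.neg (Atom.O a) ∈ S := by
      rcases hO with hO | hO
      · exact absurd ⟨hO, hnDia⟩ h3
      · exact hO
    rcases hF with hF | hF
    · right; left; simp [A2, Set.insert_subset_iff, hact, hF, hnO, hnDo, hnDia]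
    · right; right; left; simp [A3, Set.insert_subset_iff, hact, hF, hnO, hnDo, hnDia]

end Aux

section Aux2
variable {C : Type} (a : C)

lemma A1_min {S' : Set (Lit C)} (hsub : S' ⊆ A1 a)
    (hall : ∀ r ∈ reduct (CC a) (A1 a), Satisfies S' r) : A1 a ⊆ S' := by
  have hact : Lit.pos (Atom.act a) ∈ S' := by
    have := hall (R0 a) ⟨by simp [CC_eq], by simp [R0, satBody_iff]⟩
      (by simp [R0, satBody_iff])
    simpa [SatHead, R0, Set.inter_nonempty] using this
  have hO : Lit.pos (Atom.O a) ∈ S' := by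
    have := hall (R1 a) ⟨by simp [CC_eq], by simp [R1, satBody_iff, Set.subset_def, A1]⟩
      (by simp [R1, satBody_iff, Set.subset_def, hact])
    rcases (by simpa [SatHead, R1, Set.inter_nonempty] using this :
      Lit.pos (Atom.O a) ∈ S' ∨ Lit.neg (Atom.O a) ∈ S') with h | h
    · exact h
    · exact absurd (hsub h) (by simp [A1])
  have hF : Lit.neg (Atom.F a) ∈ S' := by
    have := hall (R2 a) ⟨by simp [CC_eq], by simp [R2, satBody_iff, Set.subset_def, A1]⟩
      (by simp [R2, satBody_iff, Set.subset_def, hact])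
    rcases (by simpa [SatHead, R2, Set.inter_nonempty] using this :
      Lit.pos (Atom.F a) ∈ S' ∨ Lit.neg (Atom.F a) ∈ S') with h | h
    · exact absurd (hsub h) (by simp [A1])
    · exact h
  have hDo : Lit.pos (Atom.Do a) ∈ S' := by
    have := hall (R6 a) ⟨by simp [CC_eq], by simp [R6, satBody_iff, Set.subset_def, A1]⟩
      (by simp [R6, satBody_iff, Set.subset_def, hact])
    rcases (by simpa [SatHead, R6, Set.inter_nonempty] using this :
      Lit.pos (Atom.Do a) ∈ S' ∨ Lit.neg (Atom.Do a) ∈ S') with h | h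
    · exact h
    · exact absurd (hsub h) (by simp [A1])
  have hH : Lit.pos (Atom.Happens a) ∈ S' := by
    have := hall (R8 a) ⟨by simp [CC_eq], by simp [R8, satBody_iff, Set.subset_def, A1]⟩
      (by simp [R8, satBody_iff, Set.subset_def, hDo])
    simpa [SatHead, R8, Set.inter_nonempty] using this
  simp [A1, Set.insert_subset_iff, hact, hO, hF, hDo, hH]

lemma A2_min {S' : Set (Lit C)} (hsub : S' ⊆ A2 a)
    (hall : ∀ r ∈ reduct (CC a) (A2 a), Satisfies S' r) : A2 a ⊆ S' := by
  have hact : Lit.pos (Atom.act a) ∈ S' := by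
    have := hall (R0 a) ⟨by simp [CC_eq], by simp [R0, satBody_iff]⟩
      (by simp [R0, satBody_iff])
    simpa [SatHead, R0, Set.inter_nonempty] using this
  have hO : Lit.neg (Atom.O a) ∈ S' := by
    have := hall (R1 a) ⟨by simp [CC_eq], by simp [R1, satBody_iff, Set.subset_def, A2]⟩
      (by simp [R1, satBody_iff, Set.subset_def, hact])
    rcases (by simpa [SatHead, R1, Set.inter_nonempty] using this :
      Lit.pos (Atom.O a) ∈ S' ∨ Lit.neg (Atom.O a) ∈ S') with h | h
    · exact absurd (hsub h) (by simp [A2])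
    · exact h
  have hF : Lit.pos (Atom.F a) ∈ S' := by
    have := hall (R2 a) ⟨by simp [CC_eq], by simp [R2, satBody_iff, Set.subset_def, A2]⟩
      (by simp [R2, satBody_iff, Set.subset_def, hact])
    rcases (by simpa [SatHead, R2, Set.inter_nonempty] using this :
      Lit.pos (Atom.F a) ∈ S' ∨ Lit.neg (Atom.F a) ∈ S') with h | h
    · exact h
    · exact absurd (hsub h) (by simp [A2])
  have hDo : Lit.neg (Atom.Do a) ∈ S' := by
    have := hall (R6 a) ⟨by simp [CC_eq], by simp [R6, satBody_iff, Set.subset_def, A2]⟩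
      (by simp [R6, satBody_iff, Set.subset_def, hact])
    rcases (by simpa [SatHead, R6, Set.inter_nonempty] using this :
      Lit.pos (Atom.Do a) ∈ S' ∨ Lit.neg (Atom.Do a) ∈ S') with h | h
    · exact absurd (hsub h) (by simp [A2])
    · exact h
  have hDia : Lit.neg (Atom.Dia a) ∈ S' := by
    have := hall (R4 a) ⟨by simp [CC_eq], by simp [R4, satBody_iff, Set.subset_def, A2]⟩
      (by simp [R4, satBody_iff, Set.subset_def, hDo, hact])
    simpa [SatHead, R4, Set.inter_nonempty] using this
  simp [A2, Set.insert_subset_iff, hact, hO, hF, hDo, hDia]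

lemma A3_min {S' : Set (Lit C)} (hsub : S' ⊆ A3 a)
    (hall : ∀ r ∈ reduct (CC a) (A3 a), Satisfies S' r) : A3 a ⊆ S' := by
  have hact : Lit.pos (Atom.act a) ∈ S' := by
    have := hall (R0 a) ⟨by simp [CC_eq], by simp [R0, satBody_iff]⟩
      (by simp [R0, satBody_iff])
    simpa [SatHead, R0, Set.inter_nonempty] using this
  have hO : Lit.neg (Atom.O a) ∈ S' := by
    have := hall (R1 a) ⟨by simp [CC_eq], by simp [R1, satBody_iff, Set.subset_def, A3]⟩
      (by simp [R1, satBody_iff, Set.subset_def, hact])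
    rcases (by simpa [SatHead, R1, Set.inter_nonempty] using this :
      Lit.pos (Atom.O a) ∈ S' ∨ Lit.neg (Atom.O a) ∈ S') with h | h
    · exact absurd (hsub h) (by simp [A3])
    · exact h
  have hF : Lit.neg (Atom.F a) ∈ S' := by
    have := hall (R2 a) ⟨by simp [CC_eq], by simp [R2, satBody_iff, Set.subset_def, A3]⟩
      (by simp [R2, satBody_iff, Set.subset_def, hact])
    rcases (by simpa [SatHead, R2, Set.inter_nonempty] using this :
      Lit.pos (Atom.F a) ∈ S' ∨ Lit.neg (Atom.F a) ∈ S') with h | h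
    · exact absurd (hsub h) (by simp [A3])
    · exact h
  have hDo : Lit.neg (Atom.Do a) ∈ S' := by
    have := hall (R6 a) ⟨by simp [CC_eq], by simp [R6, satBody_iff, Set.subset_def, A3]⟩
      (by simp [R6, satBody_iff, Set.subset_def, hact])
    rcases (by simpa [SatHead, R6, Set.inter_nonempty] using this :
      Lit.pos (Atom.Do a) ∈ S' ∨ Lit.neg (Atom.Do a) ∈ S') with h | h
    · exact absurd (hsub h) (by simp [A3])
    · exact h
  have hDia : Lit.neg (Atom.Dia a) ∈ S' := by
    have := hall (R4 a) ⟨by simp [CC_eq], by simp [R4, satBody_iff, Set.subset_def, A3]⟩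
      (by simp [R4, satBody_iff, Set.subset_def, hDo, hact])
    simpa [SatHead, R4, Set.inter_nonempty] using this
  simp [A3, Set.insert_subset_iff, hact, hO, hF, hDo, hDia]

lemma A4_min {S' : Set (Lit C)} (hsub : S' ⊆ A4 a)
    (hall : ∀ r ∈ reduct (CC a) (A4 a), Satisfies S' r) : A4 a ⊆ S' := by
  have hact : Lit.pos (Atom.act a) ∈ S' := by
    have := hall (R0 a) ⟨by simp [CC_eq], by simp [R0, satBody_iff]⟩
      (by simp [R0, satBody_iff])
    simpa [SatHead, R0, Set.inter_nonempty] using this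
  have hO : Lit.neg (Atom.O a) ∈ S' := by
    have := hall (R1 a) ⟨by simp [CC_eq], by simp [R1, satBody_iff, Set.subset_def, A4]⟩
      (by simp [R1, satBody_iff, Set.subset_def, hact])
    rcases (by simpa [SatHead, R1, Set.inter_nonempty] using this :
      Lit.pos (Atom.O a) ∈ S' ∨ Lit.neg (Atom.O a) ∈ S') with h | h
    · exact absurd (hsub h) (by simp [A4])
    · exact h
  have hF : Lit.neg (Atom.F a) ∈ S' := by
    have := hall (R2 a) ⟨by simp [CC_eq], by simp [R2, satBody_iff, Set.subset_def, A4]⟩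
      (by simp [R2, satBody_iff, Set.subset_def, hact])
    rcases (by simpa [SatHead, R2, Set.inter_nonempty] using this :
      Lit.pos (Atom.F a) ∈ S' ∨ Lit.neg (Atom.F a) ∈ S') with h | h
    · exact absurd (hsub h) (by simp [A4])
    · exact h
  have hDo : Lit.pos (Atom.Do a) ∈ S' := by
    have := hall (R6 a) ⟨by simp [CC_eq], by simp [R6, satBody_iff, Set.subset_def, A4]⟩
      (by simp [R6, satBody_iff, Set.subset_def, hact])
    rcases (by simpa [SatHead, R6, Set.inter_nonempty] using this :
      Lit.pos (Atom.Do a) ∈ S' ∨ Lit.neg (Atom.Do a) ∈ S') with h | h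
    · exact h
    · exact absurd (hsub h) (by simp [A4])
  have hH : Lit.pos (Atom.Happens a) ∈ S' := by
    have := hall (R8 a) ⟨by simp [CC_eq], by simp [R8, satBody_iff, Set.subset_def, A4]⟩
      (by simp [R8, satBody_iff, Set.subset_def, hDo])
    simpa [SatHead, R8, Set.inter_nonempty] using this
  simp [A4, Set.insert_subset_iff, hact, hO, hF, hDo, hH]

lemma A1_isAnswer : IsAnswerSet (CC a) (A1 a) := by
  refine ⟨?_, fun r hr => A1_sat a r hr.1 hr.2, fun S' hss hall => ?_⟩
  · rintro p ⟨h1, h2⟩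
    simp [A1] at h1 h2
    rcases h2 with rfl
    simp at h1
  · exact absurd (lt_of_le_of_lt (A1_min a hss.subset hall) hss) (lt_irrefl _)

lemma A2_isAnswer : IsAnswerSet (CC a) (A2 a) := by
  refine ⟨?_, fun r hr => A2_sat a r hr.1 hr.2, fun S' hss hall => ?_⟩
  · rintro p ⟨h1, h2⟩
    simp [A2] at h1 h2
    rcases h1 with rfl | rfl <;> simp at h2
  · exact absurd (lt_of_le_of_lt (A2_min a hss.subset hall) hss) (lt_irrefl _)

lemma A3_isAnswer : IsAnswerSet (CC a) (A3 a) := by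
  refine ⟨?_, fun r hr => A3_sat a r hr.1 hr.2, fun S' hss hall => ?_⟩
  · rintro p ⟨h1, h2⟩
    simp [A3] at h1 h2
    rcases h1 with rfl
    simp at h2
  · exact absurd (lt_of_le_of_lt (A3_min a hss.subset hall) hss) (lt_irrefl _)

lemma A4_isAnswer : IsAnswerSet (CC a) (A4 a) := by
  refine ⟨?_, fun r hr => A4_sat a r hr.1 hr.2, fun S' hss hall => ?_⟩
  · rintro p ⟨h1, h2⟩
    simp [A4] at h1 h2
    rcases h2 with rfl | rfl <;> simp at h1
  · exact absurd (lt_of_le_of_lt (A4_min a hss.subset hall) hss) (lt_irrefl _)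

end Aux2


/-- the answer sets of CC(a) are exactly A1(a), A2(a), A3(a), A4(a). -/
theorem stmt1 {C : Type} (a : C) :
    ∀ S : Set (Lit C), IsAnswerSet (CC a) S ↔
      (S = A1 a ∨ S = A2 a ∨ S = A3 a ∨ S = A4 a) := by
  intro S
  constructor
  · intro h
    have hmin := h.2.2
    rcases answer_superset a h with h1 | h2 | h3 | h4
    · left
      by_contra hne
      exact hmin (A1 a) (h1.ssubset_of_ne fun he => hne he.symm)
        (fun r hr => A1_sat a r hr.1)
    · right; left
      by_contra hne
      exact hmin (A2 a) (h2.ssubset_of_ne fun he => hne he.symm)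
        (fun r hr => A2_sat a r hr.1)
    · right; right; left
      by_contra hne
      exact hmin (A3 a) (h3.ssubset_of_ne fun he => hne he.symm)
        (fun r hr => A3_sat a r hr.1)
    · right; right; right
      by_contra hne
      exact hmin (A4 a) (h4.ssubset_of_ne fun he => hne he.symm)
        (fun r hr => A4_sat a r hr.1)
  · rintro (rfl | rfl | rfl | rfl)
    · exact A1_isAnswer a
    · exact A2_isAnswer a
    · exact A3_isAnswer a
    · exact A4_isAnswer a

end ASP
end

section
/- Let a be a constant. There is no answer set S of the common core program CC(a) with O(a) ∈ S and ¬Do(a) ∈ S. -/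
namespace ASP

variable {C : Type}

variable [DecidableEq C]

/-- no answer set of CC(a) contains both O(a) and ¬Do(a). -/
theorem stmt3 {C : Type} (a : C) :
    ∀ S : Set (Lit C), IsAnswerSet (CC a) S →
      ¬ (Lit.pos (Atom.O a) ∈ S ∧ Lit.neg (Atom.Do a) ∈ S) := by
  rintro S ⟨_, hsat, _⟩ ⟨hO, hnDo⟩
  -- act(a) ∈ S from the fact rule
  have hactR : (⟨{.pos (.act a)}, ∅, ∅⟩ : Rule C) ∈ reduct (CC a) S := by
    constructor
    · simp [CC]
    · exact ⟨Set.empty_subset S, Set.empty_inter S⟩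
  have hact : Lit.pos (Atom.act a) ∈ S := by
    obtain ⟨x, hx1, hx2⟩ := hsat _ hactR
    simp only [Set.mem_singleton_iff] at hx1; subst hx1; exact hx2
  -- rule (4) gives ¬Dia(a) ∈ S
  have h4 : (⟨{.neg (.Dia a)}, {.neg (.Do a), .pos (.act a)}, ∅⟩ : Rule C)
      ∈ reduct (CC a) S := by
    constructor
    · simp [CC]
    · refine ⟨?_, Set.empty_inter S⟩
      intro x hx
      rcases hx with h | h
      · subst h; exact hnDo
      · simp only [Set.mem_singleton_iff] at h; subst h; exact hact
  have hnDia : Lit.neg (Atom.Dia a) ∈ S := by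
    obtain ⟨x, hx1, hx2⟩ := hsat _ h4
    simp only [Set.mem_singleton_iff] at hx1; subst hx1; exact hx2
  -- constraint (3) is violated
  have h3 : (⟨∅, {.pos (.O a), .neg (.Dia a)}, ∅⟩ : Rule C)
      ∈ reduct (CC a) S := by
    constructor
    · simp [CC]
    · refine ⟨?_, Set.empty_inter S⟩
      intro x hx
      rcases hx with h | h
      · subst h; exact hO
      · simp only [Set.mem_singleton_iff] at h; subst h; exact hnDia
  obtain ⟨x, hx1, _⟩ := hsat _ h3
  exact hx1.elim

end ASP
end

section
/- Let a be a constant. Every answer set S of the common core program CC(a) contains act(a), contains exactly one of the literals O(a) and ¬O(a), exactly one of F(a) and ¬F(a), and exactly one of Do(a) and ¬Do(a), and does not contain the atom Dia(a). -/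
namespace ASP

variable {C : Type} {P : Set (Rule C)} {S : Set (Lit C)}

theorem IsAnswerSet.satHead (hS : IsAnswerSet P S) {r : Rule C} (hr : r ∈ P)
    (hbody : SatBody S r) : SatHead S r :=
  hS.2.1 r ⟨hr, hbody⟩

theorem IsAnswerSet.mem_of_fact (hS : IsAnswerSet P S) {l : Lit C} (hr : ⟨{l}, ∅, ∅⟩ ∈ P) :
    l ∈ S := by
  obtain ⟨l', rfl, hl'⟩ := hS.satHead hr ⟨Set.empty_subset S, Set.empty_inter S⟩
  exact hl'

theorem Consistent.pos_mem_and_neg_not_mem_or (hS : Consistent S)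
    {p : Atom C} (h : Lit.pos p ∈ S ∨ Lit.neg p ∈ S) :
    (Lit.pos p ∈ S ∧ Lit.neg p ∉ S) ∨ (Lit.pos p ∉ S ∧ Lit.neg p ∈ S) := by
  rcases h with hpos | hneg
  · exact Or.inl ⟨hpos, fun hneg => hS p ⟨hpos, hneg⟩⟩
  · exact Or.inr ⟨fun hpos => hS p ⟨hpos, hneg⟩, hneg⟩

theorem IsAnswerSet.pos_mem_and_neg_not_mem_or_of_choice (hS : IsAnswerSet P S)
    {p : Atom C} {B : Set (Lit C)}
    (hr : ⟨{Lit.pos p, Lit.neg p}, B, ∅⟩ ∈ P) (hB : B ⊆ S) :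
    (Lit.pos p ∈ S ∧ Lit.neg p ∉ S) ∨ (Lit.pos p ∉ S ∧ Lit.neg p ∈ S) := by
  obtain ⟨l, hl, hlS⟩ := hS.satHead hr ⟨hB, Set.empty_inter S⟩
  refine hS.1.pos_mem_and_neg_not_mem_or ?_
  rcases hl with rfl | rfl
  exacts [Or.inl hlS, Or.inr hlS]

/-- Every head met by `S` is still met by `S \ {l}`, contradicting minimality. -/
theorem IsAnswerSet.not_mem_of_forall_not_mem_head (hS : IsAnswerSet P S)
    {l : Lit C} (hl : ∀ r ∈ P, l ∉ r.head) : l ∉ S := by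
  intro hlS
  refine hS.2.2 (S \ {l}) (Set.sdiff_singleton_ssubset.2 hlS) fun r hr _ => ?_
  obtain ⟨h, hh, hhS⟩ := hS.2.1 r hr
  exact ⟨h, hh, hhS, fun hhl => hl r hr.1 (hhl ▸ hh)⟩

theorem pos_Dia_not_mem_head_CC (a : C) : ∀ r ∈ CC a, Lit.pos (Atom.Dia a) ∉ r.head := by
  simp [CC]

/-- every answer set of CC(a) contains act(a), exactly one of
O(a)/¬O(a), exactly one of F(a)/¬F(a), exactly one of Do(a)/¬Do(a), and does
not contain the atom Dia(a). -/
theorem stmt6 {C : Type} (a : C) :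
    ∀ S : Set (Lit C), IsAnswerSet (CC a) S →
      Lit.pos (Atom.act a) ∈ S ∧
      ((Lit.pos (Atom.O a) ∈ S ∧ Lit.neg (Atom.O a) ∉ S) ∨
        (Lit.pos (Atom.O a) ∉ S ∧ Lit.neg (Atom.O a) ∈ S)) ∧
      ((Lit.pos (Atom.F a) ∈ S ∧ Lit.neg (Atom.F a) ∉ S) ∨
        (Lit.pos (Atom.F a) ∉ S ∧ Lit.neg (Atom.F a) ∈ S)) ∧
      ((Lit.pos (Atom.Do a) ∈ S ∧ Lit.neg (Atom.Do a) ∉ S) ∨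
        (Lit.pos (Atom.Do a) ∉ S ∧ Lit.neg (Atom.Do a) ∈ S)) ∧
      Lit.pos (Atom.Dia a) ∉ S := by
  intro S hS
  have hact : Lit.pos (Atom.act a) ∈ S := hS.mem_of_fact (by simp [CC])
  have hact_subset : {Lit.pos (Atom.act a)} ⊆ S := Set.singleton_subset_iff.2 hact
  exact ⟨hact,
    hS.pos_mem_and_neg_not_mem_or_of_choice (by simp [CC]) hact_subset,
    hS.pos_mem_and_neg_not_mem_or_of_choice (by simp [CC]) hact_subset,
    hS.pos_mem_and_neg_not_mem_or_of_choice (by simp [CC]) hact_subset,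
    hS.not_mem_of_forall_not_mem_head (pos_Dia_not_mem_head_CC a)⟩

end ASP
end

section
/- Let a be a constant. Every answer set S of the common core program CC(a) with O(a) ∈ S also contains ¬F(a), Do(a) and Happens(a); i.e., in every answer set, an obligatory action is not forbidden, is taken, and happens. -/
namespace ASP

variable {C : Type}

variable [DecidableEq C]

/-- every answer set of CC(a) containing O(a) also contains
¬F(a), Do(a) and Happens(a). -/
theorem stmt7 {C : Type} (a : C) :
    ∀ S : Set (Lit C), IsAnswerSet (CC a) S → Lit.pos (Atom.O a) ∈ S →
      Lit.neg (Atom.F a) ∈ S ∧ Lit.pos (Atom.Do a) ∈ S ∧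
        Lit.pos (Atom.Happens a) ∈ S := by
  intro S hAS hO
  obtain ⟨hcons, hhead, -⟩ := hAS
  -- act(a) ∈ S from the fact rule
  have hact : Lit.pos (Atom.act a) ∈ S := by
    have h := hhead ⟨{.pos (.act a)}, ∅, ∅⟩ ⟨by simp [CC], by simp [SatBody]⟩
    obtain ⟨l, hl, hlS⟩ := h
    simp only [Set.mem_singleton_iff] at hl
    subst hl; exact hlS
  -- Do(a) ∈ S
  have hDo : Lit.pos (Atom.Do a) ∈ S := by
    have h := hhead ⟨{.pos (.Do a), .neg (.Do a)}, {.pos (.act a)}, ∅⟩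
      ⟨by simp [CC], by simp [SatBody, hact]⟩
    obtain ⟨l, hl, hlS⟩ := h
    simp only [Set.mem_insert_iff, Set.mem_singleton_iff] at hl
    rcases hl with rfl | rfl
    · exact hlS
    · -- ¬Do(a) ∈ S: rule (4) gives ¬Dia(a) ∈ S, then constraint (3) fails
      exfalso
      have hDia : Lit.neg (Atom.Dia a) ∈ S := by
        have h4 := hhead ⟨{.neg (.Dia a)}, {.neg (.Do a), .pos (.act a)}, ∅⟩
          ⟨by simp [CC], by simp [SatBody, Set.insert_subset_iff, hlS, hact]⟩
        obtain ⟨l', hl', hl'S⟩ := h4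
        simp only [Set.mem_singleton_iff] at hl'
        subst hl'; exact hl'S
      have h3 := hhead ⟨∅, {.pos (.O a), .neg (.Dia a)}, ∅⟩
        ⟨by simp [CC], by simp [SatBody, Set.insert_subset_iff, hO, hDia]⟩
      simp [SatHead] at h3
  -- Happens(a) ∈ S via rule (8)
  have hHap : Lit.pos (Atom.Happens a) ∈ S := by
    have h := hhead ⟨{.pos (.Happens a)}, {.pos (.Do a)}, ∅⟩
      ⟨by simp [CC], by simp [SatBody, hDo]⟩
    obtain ⟨l, hl, hlS⟩ := h
    simp only [Set.mem_singleton_iff] at hl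
    subst hl; exact hlS
  -- ¬F(a) ∈ S via rule (2), refuting F(a) with constraint (7)
  have hnF : Lit.neg (Atom.F a) ∈ S := by
    have h := hhead ⟨{.pos (.F a), .neg (.F a)}, {.pos (.act a)}, ∅⟩
      ⟨by simp [CC], by simp [SatBody, hact]⟩
    obtain ⟨l, hl, hlS⟩ := h
    simp only [Set.mem_insert_iff, Set.mem_singleton_iff] at hl
    rcases hl with rfl | rfl
    · exfalso
      have h7 := hhead ⟨∅, {.pos (.F a), .pos (.Do a)}, ∅⟩
        ⟨by simp [CC], by simp [SatBody, Set.insert_subset_iff, hlS, hDo]⟩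
      simp [SatHead] at h7
    · exact hlS
  exact ⟨hnF, hDo, hHap⟩


end ASP
end

section
/- Let a be a constant. Every answer set S of the common core program CC(a) with F(a) ∈ S also contains ¬O(a), ¬Do(a) and ¬Dia(a); i.e., in every answer set, a forbidden action is not obligatory, is definitely not taken, and is not an option. -/
namespace ASP

variable {C : Type}

variable [DecidableEq C]

/-- every answer set of CC(a) containing F(a) also contains
¬O(a), ¬Do(a) and ¬Dia(a). -/
theorem stmt8 {C : Type} (a : C) :
    ∀ S : Set (Lit C), IsAnswerSet (CC a) S → Lit.pos (Atom.F a) ∈ S →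
      Lit.neg (Atom.O a) ∈ S ∧ Lit.neg (Atom.Do a) ∈ S ∧
        Lit.neg (Atom.Dia a) ∈ S := by
  intro S hAS hF
  obtain ⟨hcons, hhead, -⟩ := hAS
  -- act(a) ∈ S from the fact
  have hact : Lit.pos (Atom.act a) ∈ S := by
    have := hhead ⟨{.pos (.act a)}, ∅, ∅⟩
      ⟨by simp [CC], by constructor <;> simp [Set.empty_inter]⟩
    obtain ⟨x, hx1, hx2⟩ := this
    simp only [Set.mem_singleton_iff] at hx1
    subst hx1; exact hx2
  -- O(a) ∉ S via constraint (5)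
  have hnO : Lit.pos (Atom.O a) ∉ S := by
    intro hO
    have := hhead ⟨∅, {.pos (.O a), .pos (.F a)}, ∅⟩
      ⟨by simp [CC], by
        constructor
        · intro x hx
          simp only [Set.mem_insert_iff, Set.mem_singleton_iff] at hx
          rcases hx with h | h <;> subst h <;> assumption
        · simp [Set.empty_inter]⟩
    obtain ⟨x, hx1, -⟩ := this
    exact hx1
  -- Do(a) ∉ S via constraint (7)
  have hnDo : Lit.pos (Atom.Do a) ∉ S := by
    intro hDo
    have := hhead ⟨∅, {.pos (.F a), .pos (.Do a)}, ∅⟩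
      ⟨by simp [CC], by
        constructor
        · intro x hx
          simp only [Set.mem_insert_iff, Set.mem_singleton_iff] at hx
          rcases hx with h | h <;> subst h <;> assumption
        · simp [Set.empty_inter]⟩
    obtain ⟨x, hx1, -⟩ := this
    exact hx1
  -- ¬O(a) ∈ S from rule (1)
  have hO : Lit.neg (Atom.O a) ∈ S := by
    have := hhead ⟨{.pos (.O a), .neg (.O a)}, {.pos (.act a)}, ∅⟩
      ⟨by simp [CC], by
        constructor
        · intro x hx; simp only [Set.mem_singleton_iff] at hx; subst hx; exact hact
        · simp [Set.empty_inter]⟩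
    obtain ⟨x, hx1, hx2⟩ := this
    simp only [Set.mem_insert_iff, Set.mem_singleton_iff] at hx1
    rcases hx1 with h | h
    · subst h; exact absurd hx2 hnO
    · subst h; exact hx2
  -- ¬Do(a) ∈ S from rule (6)
  have hDo : Lit.neg (Atom.Do a) ∈ S := by
    have := hhead ⟨{.pos (.Do a), .neg (.Do a)}, {.pos (.act a)}, ∅⟩
      ⟨by simp [CC], by
        constructor
        · intro x hx; simp only [Set.mem_singleton_iff] at hx; subst hx; exact hact
        · simp [Set.empty_inter]⟩
    obtain ⟨x, hx1, hx2⟩ := this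
    simp only [Set.mem_insert_iff, Set.mem_singleton_iff] at hx1
    rcases hx1 with h | h
    · subst h; exact absurd hx2 hnDo
    · subst h; exact hx2
  -- ¬Dia(a) ∈ S from rule (4)
  have hDia : Lit.neg (Atom.Dia a) ∈ S := by
    have := hhead ⟨{.neg (.Dia a)}, {.neg (.Do a), .pos (.act a)}, ∅⟩
      ⟨by simp [CC], by
        constructor
        · intro x hx
          simp only [Set.mem_insert_iff, Set.mem_singleton_iff] at hx
          rcases hx with h | h <;> subst h <;> assumption
        · simp [Set.empty_inter]⟩
    obtain ⟨x, hx1, hx2⟩ := this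
    simp only [Set.mem_singleton_iff] at hx1
    subst hx1; exact hx2
  exact ⟨hO, hDo, hDia⟩

end ASP
end

section
/- Let a be a constant. The set A1(a) = {act(a), O(a), ¬F(a), Do(a), Happens(a)} is an answer set of the common core program CC(a). -/
namespace ASP

variable {C : Type}

variable [DecidableEq C]

/-- A1(a) is an answer set of CC(a). -/
theorem stmt9 {C : Type} (a : C) : IsAnswerSet (CC a) (A1 a) := by
  refine ⟨?_, ?_, ?_⟩
  · intro p ⟨hp, hn⟩
    simp only [A1, Set.mem_insert_iff, Set.mem_singleton_iff] at hp hn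
    rcases hp with h|h|h|h <;> simp_all
  · rintro r ⟨hmem, hbody⟩
    simp only [CC, Set.mem_insert_iff, Set.mem_singleton_iff] at hmem
    rcases hmem with rfl|rfl|rfl|rfl|rfl|rfl|rfl|rfl|rfl|rfl
    · exact ⟨Lit.pos (.act a), by simp [A1]⟩
    · exact ⟨Lit.pos (.O a), by simp [A1]⟩
    · exact ⟨Lit.neg (.F a), by simp [A1]⟩
    · exact absurd (hbody.1 (show Lit.neg (.Dia a) ∈ _ by simp)) (by simp [A1])
    · exact absurd (hbody.1 (show Lit.neg (.Do a) ∈ _ by simp)) (by simp [A1])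
    · exact absurd (hbody.1 (show Lit.pos (.F a) ∈ _ by simp)) (by simp [A1])
    · exact ⟨Lit.pos (.Do a), by simp [A1]⟩
    · exact absurd (hbody.1 (show Lit.pos (.F a) ∈ _ by simp)) (by simp [A1])
    · exact ⟨Lit.pos (.Happens a), by simp [A1]⟩
    · exact absurd (hbody.1 (show Lit.neg (.Dia a) ∈ _ by simp)) (by simp [A1])
  · intro S' hS' H
    have hsub : S' ⊆ A1 a := hS'.1
    have hred : ∀ r : Rule C, r ∈ CC a → SatBody (A1 a) r → SatBody S' r →
        SatHead S' r := fun r h1 h2 h3 => H r ⟨h1, h2⟩ h3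
    have hact : Lit.pos (.act a) ∈ S' := by
      obtain ⟨x, hx1, hx2⟩ := hred ⟨{.pos (.act a)}, ∅, ∅⟩ (by simp [CC])
        ⟨by simp, by simp⟩ ⟨by simp, by simp⟩
      simp only [Set.mem_singleton_iff] at hx1; subst hx1; exact hx2
    have hO : Lit.pos (.O a) ∈ S' := by
      obtain ⟨x, hx1, hx2⟩ := hred ⟨{.pos (.O a), .neg (.O a)}, {.pos (.act a)}, ∅⟩
        (by simp [CC]) ⟨by simp [A1], by simp⟩
        ⟨Set.singleton_subset_iff.mpr hact, by simp⟩
      rcases hx1 with rfl | hx1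
      · exact hx2
      · simp only [Set.mem_singleton_iff] at hx1; subst hx1
        exact absurd (hsub hx2) (by simp [A1])
    have hF : Lit.neg (.F a) ∈ S' := by
      obtain ⟨x, hx1, hx2⟩ := hred ⟨{.pos (.F a), .neg (.F a)}, {.pos (.act a)}, ∅⟩
        (by simp [CC]) ⟨by simp [A1], by simp⟩
        ⟨Set.singleton_subset_iff.mpr hact, by simp⟩
      rcases hx1 with rfl | hx1
      · exact absurd (hsub hx2) (by simp [A1])
      · simp only [Set.mem_singleton_iff] at hx1; subst hx1; exact hx2
    have hDo : Lit.pos (.Do a) ∈ S' := by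
      obtain ⟨x, hx1, hx2⟩ := hred ⟨{.pos (.Do a), .neg (.Do a)}, {.pos (.act a)}, ∅⟩
        (by simp [CC]) ⟨by simp [A1], by simp⟩
        ⟨Set.singleton_subset_iff.mpr hact, by simp⟩
      rcases hx1 with rfl | hx1
      · exact hx2
      · simp only [Set.mem_singleton_iff] at hx1; subst hx1
        exact absurd (hsub hx2) (by simp [A1])
    have hH : Lit.pos (.Happens a) ∈ S' := by
      obtain ⟨x, hx1, hx2⟩ := hred ⟨{.pos (.Happens a)}, {.pos (.Do a)}, ∅⟩
        (by simp [CC]) ⟨by simp [A1], by simp⟩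
        ⟨Set.singleton_subset_iff.mpr hDo, by simp⟩
      simp only [Set.mem_singleton_iff] at hx1; subst hx1; exact hx2
    apply hS'.2
    intro x hx
    rcases hx with rfl|rfl|rfl|rfl|rfl
    exacts [hact, hO, hF, hDo, hH]

end ASP
end

section
/- Let a be a constant. The set A3(a) = {act(a), ¬F(a), ¬O(a), ¬Do(a), ¬Dia(a)} is an answer set of the common core program CC(a). -/
namespace ASP

variable {C : Type}

variable [DecidableEq C]

/-- A3(a) is an answer set of CC(a). -/
theorem stmt11 {C : Type} (a : C) : IsAnswerSet (CC a) (A3 a) := by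
  refine ⟨?_, ?_, ?_⟩
  · intro p hp
    simp only [A3, Set.mem_insert_iff, Set.mem_singleton_iff] at hp
    obtain ⟨h1, h2⟩ := hp
    rcases h1 with h|h|h|h|h <;> rcases h2 with g|g|g|g|g <;> simp_all
  · intro r hr
    simp only [reduct, CC, Set.mem_setOf_eq, Set.mem_insert_iff,
      Set.mem_singleton_iff] at hr
    obtain ⟨hm, hb⟩ := hr
    rcases hm with h|h|h|h|h|h|h|h|h|h <;> subst h
    · exact ⟨.pos (.act a), by simp [A3]⟩
    · exact ⟨.neg (.O a), by simp [A3]⟩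
    · exact ⟨.neg (.F a), by simp [A3]⟩
    · have := hb.1 (show Lit.pos (.O a) ∈ _ from Set.mem_insert _ _)
      simp [A3] at this
    · exact ⟨.neg (.Dia a), by simp [A3]⟩
    · have := hb.1 (show Lit.pos (.O a) ∈ _ from Set.mem_insert _ _)
      simp [A3] at this
    · exact ⟨.neg (.Do a), by simp [A3]⟩
    · have := hb.1 (show Lit.pos (.F a) ∈ _ from Set.mem_insert _ _)
      simp [A3] at this
    · have := hb.1 (show Lit.pos (.Do a) ∈ _ from rfl)
      simp [A3] at this
    · have := hb.1 (show Lit.pos (.Do a) ∈ _ from Set.mem_insert _ _)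
      simp [A3] at this
  · intro S' hsub hsat
    have hss : S' ⊆ A3 a := hsub.1
    have hbody : ∀ r : Rule C, r.pos ⊆ S' → r.neg = ∅ → SatBody S' r := by
      intro r h1 h2
      exact ⟨h1, by simp [h2]⟩
    -- fact gives act
    have hact : Lit.pos (.act a) ∈ S' := by
      have h := hsat ⟨{.pos (.act a)}, ∅, ∅⟩ ⟨by simp [CC], by simp [SatBody]⟩
        (hbody _ (by simp) rfl)
      obtain ⟨x, hx1, hx2⟩ := h
      simp only [Set.mem_singleton_iff] at hx1; subst hx1; exact hx2
    have hbodyS : SatBody (A3 a) (⟨{.pos (.O a), .neg (.O a)},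
        {.pos (.act a)}, ∅⟩ : Rule C) := ⟨by simp [A3, Set.insert_subset_iff], by simp⟩
    have hO : Lit.neg (.O a) ∈ S' := by
      have h := hsat ⟨{.pos (.O a), .neg (.O a)}, {.pos (.act a)}, ∅⟩
        ⟨by simp [CC], ⟨by simp [A3, Set.insert_subset_iff], by simp⟩⟩
        (hbody _ (by simpa using hact) rfl)
      obtain ⟨x, hx1, hx2⟩ := h
      rcases hx1 with h|h <;> subst h
      · exact absurd (hss hx2) (by simp [A3])
      · exact hx2
    have hF : Lit.neg (.F a) ∈ S' := by
      have h := hsat ⟨{.pos (.F a), .neg (.F a)}, {.pos (.act a)}, ∅⟩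
        ⟨by simp [CC], ⟨by simp [A3, Set.insert_subset_iff], by simp⟩⟩
        (hbody _ (by simpa using hact) rfl)
      obtain ⟨x, hx1, hx2⟩ := h
      rcases hx1 with h|h <;> subst h
      · exact absurd (hss hx2) (by simp [A3])
      · exact hx2
    have hDo : Lit.neg (.Do a) ∈ S' := by
      have h := hsat ⟨{.pos (.Do a), .neg (.Do a)}, {.pos (.act a)}, ∅⟩
        ⟨by simp [CC], ⟨by simp [A3, Set.insert_subset_iff], by simp⟩⟩
        (hbody _ (by simpa using hact) rfl)
      obtain ⟨x, hx1, hx2⟩ := h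
      rcases hx1 with h|h <;> subst h
      · exact absurd (hss hx2) (by simp [A3])
      · exact hx2
    have hDia : Lit.neg (.Dia a) ∈ S' := by
      have h := hsat ⟨{.neg (.Dia a)}, {.neg (.Do a), .pos (.act a)}, ∅⟩
        ⟨by simp [CC], ⟨by simp [A3, Set.insert_subset_iff], by simp⟩⟩
        (hbody _ (by intro x hx; rcases hx with h|h <;> subst h <;> assumption) rfl)
      obtain ⟨x, hx1, hx2⟩ := h
      simp only [Set.mem_singleton_iff] at hx1; subst hx1; exact hx2
    have : A3 a ⊆ S' := by
      intro x hx
      rcases hx with h|h|h|h|h <;> subst h <;> assumption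
    exact hsub.2 this

end ASP
end

section
/- Let a be a constant. The set A4(a) = {act(a), ¬F(a), ¬O(a), Do(a), Happens(a)} is an answer set of the common core program CC(a). -/
namespace ASP

variable {C : Type}

variable [DecidableEq C]

/-- A4(a) is an answer set of CC(a). -/
theorem stmt12 {C : Type} (a : C) : IsAnswerSet (CC a) (A4 a) := by
  refine ⟨?_, ?_, ?_⟩
  · intro p ⟨h1, h2⟩
    simp [A4] at h1 h2
    rcases h1 with h | h | h <;> subst h <;> simp at h2
  · intro r hr
    obtain ⟨hmem, hpos, -⟩ := hr
    simp only [CC, Set.mem_insert_iff, Set.mem_singleton_iff] at hmem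
    rcases hmem with h|h|h|h|h|h|h|h|h|h <;> subst h
    · exact ⟨Lit.pos (Atom.act a), by simp [A4]⟩
    · exact ⟨Lit.neg (Atom.O a), by simp [A4]⟩
    · exact ⟨Lit.neg (Atom.F a), by simp [A4]⟩
    · exfalso; have := hpos (Set.mem_insert _ _); simp [A4] at this
    · exfalso; have := hpos (Set.mem_insert _ _); simp [A4] at this
    · exfalso; have := hpos (Set.mem_insert _ _); simp [A4] at this
    · exact ⟨Lit.pos (Atom.Do a), by simp [A4]⟩
    · exfalso; have := hpos (Set.mem_insert _ _); simp [A4] at this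
    · exact ⟨Lit.pos (Atom.Happens a), by simp [A4]⟩
    · exfalso; have := hpos (Set.mem_insert_of_mem _ rfl); simp [A4] at this
  · intro S' hss hsat
    have hsub : S' ⊆ A4 a := hss.1
    have hact : Lit.pos (Atom.act a) ∈ S' := by
      have := hsat ⟨{.pos (.act a)}, ∅, ∅⟩
        ⟨by simp [CC], by simp [SatBody]⟩ (by simp [SatBody])
      simpa [SatHead] using this
    have getlit : ∀ (x y : Lit C), x ∉ A4 a →
        (({x, y} : Set (Lit C)) ∩ S').Nonempty → y ∈ S' := by
      intro x y hx ⟨z, hz1, hz2⟩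
      rcases hz1 with h | h
      · exact absurd (hsub hz2) (h ▸ hx)
      · exact h ▸ hz2
    have s1 : SatHead S' (⟨{.pos (.O a), .neg (.O a)}, {.pos (.act a)}, ∅⟩ : Rule C) :=
      hsat _ ⟨by simp [CC], ⟨by simp [A4], by simp⟩⟩ ⟨by simpa using hact, by simp⟩
    have hO : Lit.neg (Atom.O a) ∈ S' := getlit _ _ (by simp [A4]) s1
    have s2 : SatHead S' (⟨{.pos (.F a), .neg (.F a)}, {.pos (.act a)}, ∅⟩ : Rule C) :=
      hsat _ ⟨by simp [CC], ⟨by simp [A4], by simp⟩⟩ ⟨by simpa using hact, by simp⟩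
    have hF : Lit.neg (Atom.F a) ∈ S' := getlit _ _ (by simp [A4]) s2
    have s3 : SatHead S' (⟨{.pos (.Do a), .neg (.Do a)}, {.pos (.act a)}, ∅⟩ : Rule C) :=
      hsat _ ⟨by simp [CC], ⟨by simp [A4], by simp⟩⟩ ⟨by simpa using hact, by simp⟩
    have hDo : Lit.pos (Atom.Do a) ∈ S' := by
      obtain ⟨z, hz1, hz2⟩ := s3
      rcases hz1 with h | h
      · exact h ▸ hz2
      · exact absurd (hsub hz2) (by subst h; simp [A4])
    have s4 : SatHead S' (⟨{.pos (.Happens a)}, {.pos (.Do a)}, ∅⟩ : Rule C) :=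
      hsat _ ⟨by simp [CC], ⟨by simp [A4], by simp⟩⟩ ⟨by simpa using hDo, by simp⟩
    have hH : Lit.pos (Atom.Happens a) ∈ S' := by
      simpa [SatHead] using s4
    refine absurd ?_ hss.2
    intro x hx
    simp [A4] at hx
    rcases hx with h|h|h|h|h <;> subst h <;> assumption

end ASP
end

section
/- Every optimal answer set of the Ross program (Π_R, W_R) contains O(mail) and Do(mail), and no optimal answer set of (Π_R, W_R) contains O(burn). (The encoding of Ross's Paradox derives the obligation to mail the letter but never the obligation to burn it.) -/
namespace ASP

variable {C : Type}

variable [DecidableEq C]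

/-- The constants used in the concrete examples. -/
inductive Const where
  | mail | burn | meet | help | emergency | have_fence | have_white_fence | sea
  deriving DecidableEq


/-- The Ross program: CC(mail) ∪ CC(burn). -/
def RossProgram : Set (Rule Const) := CC Const.mail ∪ CC Const.burn

/-- The weak constraints of the Ross program:
WC(mail) ∪ WC(burn) ∪ { ':~ ¬O(mail) [1:2]' }. -/
def RossW : Finset (WeakConstraint Const) :=
  WC Const.mail ∪ WC Const.burn ∪ { ⟨{.neg (.O .mail)}, ∅, 1, 2⟩ }


def S0 : Set (Lit Const) := A1 Const.mail ∪ A3 Const.burn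

def rF (a : Const) : Rule Const := ⟨{.pos (.act a)}, ∅, ∅⟩
def r1 (a : Const) : Rule Const := ⟨{.pos (.O a), .neg (.O a)}, {.pos (.act a)}, ∅⟩
def r2 (a : Const) : Rule Const := ⟨{.pos (.F a), .neg (.F a)}, {.pos (.act a)}, ∅⟩
def r3 (a : Const) : Rule Const := ⟨∅, {.pos (.O a), .neg (.Dia a)}, ∅⟩
def r4 (a : Const) : Rule Const := ⟨{.neg (.Dia a)}, {.neg (.Do a), .pos (.act a)}, ∅⟩
def r6 (a : Const) : Rule Const := ⟨{.pos (.Do a), .neg (.Do a)}, {.pos (.act a)}, ∅⟩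
def r8 (a : Const) : Rule Const := ⟨{.pos (.Happens a)}, {.pos (.Do a)}, ∅⟩

lemma mem_rF (a : Const) : rF a ∈ CC a := by simp [CC, rF]
lemma mem_r1 (a : Const) : r1 a ∈ CC a := by simp [CC, r1]
lemma mem_r2 (a : Const) : r2 a ∈ CC a := by simp [CC, r2]
lemma mem_r3 (a : Const) : r3 a ∈ CC a := by simp [CC, r3]
lemma mem_r4 (a : Const) : r4 a ∈ CC a := by simp [CC, r4]
lemma mem_r6 (a : Const) : r6 a ∈ CC a := by simp [CC, r6]
lemma mem_r8 (a : Const) : r8 a ∈ CC a := by simp [CC, r8]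

lemma head_of {S : Set (Lit Const)} (hS : IsAnswerSet RossProgram S)
    {r : Rule Const} (hr : r ∈ RossProgram) (hb : SatBody S r) : SatHead S r :=
  hS.2.1 r ⟨hr, hb⟩

lemma consistent_S0 : Consistent S0 := by
  intro p ⟨h1, h2⟩
  simp [S0, A1, A3] at h1 h2
  rcases h1 with rfl|rfl|rfl|rfl|rfl <;> simp_all

set_option maxHeartbeats 1000000 in
lemma heads_S0 : ∀ r ∈ reduct RossProgram S0, SatHead S0 r := by
  rintro r ⟨hr, hb⟩
  rcases hr with hr|hr <;> simp [CC] at hr <;>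
    rcases hr with rfl|rfl|rfl|rfl|rfl|rfl|rfl|rfl|rfl|rfl <;>
    simp_all [SatBody, SatHead, Set.inter_nonempty, Set.insert_subset_iff, S0, A1, A3]

-- body-satisfaction facts for S0
lemma body_rF_S0 (a : Const) : SatBody S0 (rF a) := by simp [SatBody, rF]
lemma body_r1m_S0 : SatBody S0 (r1 Const.mail) := by simp [SatBody, r1, S0, A1, A3]
lemma body_r1b_S0 : SatBody S0 (r1 Const.burn) := by simp [SatBody, r1, S0, A1, A3]
lemma body_r2m_S0 : SatBody S0 (r2 Const.mail) := by simp [SatBody, r2, S0, A1, A3]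
lemma body_r2b_S0 : SatBody S0 (r2 Const.burn) := by simp [SatBody, r2, S0, A1, A3]
lemma body_r6m_S0 : SatBody S0 (r6 Const.mail) := by simp [SatBody, r6, S0, A1, A3]
lemma body_r6b_S0 : SatBody S0 (r6 Const.burn) := by simp [SatBody, r6, S0, A1, A3]
lemma body_r8m_S0 : SatBody S0 (r8 Const.mail) := by simp [SatBody, r8, S0, A1, A3]
lemma body_r4b_S0 : SatBody S0 (r4 Const.burn) := by
  simp [SatBody, r4, Set.insert_subset_iff, S0, A1, A3]

set_option maxHeartbeats 1000000 in
lemma AS_S0 : IsAnswerSet RossProgram S0 := by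
  refine ⟨consistent_S0, heads_S0, ?_⟩
  intro S' hss hall
  apply hss.2
  have hsub : S' ⊆ S0 := hss.1
  have hactm : Lit.pos (Atom.act Const.mail) ∈ S' := by
    have h := hall (rF Const.mail) ⟨Or.inl (mem_rF _), body_rF_S0 _⟩
      ⟨by simp [rF], by simp [rF]⟩
    simpa [SatHead, rF, Set.inter_nonempty] using h
  have hactb : Lit.pos (Atom.act Const.burn) ∈ S' := by
    have h := hall (rF Const.burn) ⟨Or.inr (mem_rF _), body_rF_S0 _⟩
      ⟨by simp [rF], by simp [rF]⟩
    simpa [SatHead, rF, Set.inter_nonempty] using h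
  have hOm : Lit.pos (Atom.O Const.mail) ∈ S' := by
    have h := hall (r1 Const.mail) ⟨Or.inl (mem_r1 _), body_r1m_S0⟩
      ⟨by simp [r1, Set.singleton_subset_iff, hactm], by simp [r1]⟩
    rcases (by simpa [SatHead, r1, Set.inter_nonempty] using h :
      Lit.pos (Atom.O Const.mail) ∈ S' ∨ Lit.neg (Atom.O Const.mail) ∈ S') with h|h
    · exact h
    · exact absurd (hsub h) (by simp [S0, A1, A3])
  have hFm : Lit.neg (Atom.F Const.mail) ∈ S' := by
    have h := hall (r2 Const.mail) ⟨Or.inl (mem_r2 _), body_r2m_S0⟩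
      ⟨by simp [r2, Set.singleton_subset_iff, hactm], by simp [r2]⟩
    rcases (by simpa [SatHead, r2, Set.inter_nonempty] using h :
      Lit.pos (Atom.F Const.mail) ∈ S' ∨ Lit.neg (Atom.F Const.mail) ∈ S') with h|h
    · exact absurd (hsub h) (by simp [S0, A1, A3])
    · exact h
  have hDom : Lit.pos (Atom.Do Const.mail) ∈ S' := by
    have h := hall (r6 Const.mail) ⟨Or.inl (mem_r6 _), body_r6m_S0⟩
      ⟨by simp [r6, Set.singleton_subset_iff, hactm], by simp [r6]⟩
    rcases (by simpa [SatHead, r6, Set.inter_nonempty] using h :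
      Lit.pos (Atom.Do Const.mail) ∈ S' ∨ Lit.neg (Atom.Do Const.mail) ∈ S') with h|h
    · exact h
    · exact absurd (hsub h) (by simp [S0, A1, A3])
  have hHm : Lit.pos (Atom.Happens Const.mail) ∈ S' := by
    have h := hall (r8 Const.mail) ⟨Or.inl (mem_r8 _), body_r8m_S0⟩
      ⟨by simp [r8, Set.singleton_subset_iff, hDom], by simp [r8]⟩
    simpa [SatHead, r8, Set.inter_nonempty] using h
  have hOb : Lit.neg (Atom.O Const.burn) ∈ S' := by
    have h := hall (r1 Const.burn) ⟨Or.inr (mem_r1 _), body_r1b_S0⟩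
      ⟨by simp [r1, Set.singleton_subset_iff, hactb], by simp [r1]⟩
    rcases (by simpa [SatHead, r1, Set.inter_nonempty] using h :
      Lit.pos (Atom.O Const.burn) ∈ S' ∨ Lit.neg (Atom.O Const.burn) ∈ S') with h|h
    · exact absurd (hsub h) (by simp [S0, A1, A3])
    · exact h
  have hFb : Lit.neg (Atom.F Const.burn) ∈ S' := by
    have h := hall (r2 Const.burn) ⟨Or.inr (mem_r2 _), body_r2b_S0⟩
      ⟨by simp [r2, Set.singleton_subset_iff, hactb], by simp [r2]⟩
    rcases (by simpa [SatHead, r2, Set.inter_nonempty] using h :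
      Lit.pos (Atom.F Const.burn) ∈ S' ∨ Lit.neg (Atom.F Const.burn) ∈ S') with h|h
    · exact absurd (hsub h) (by simp [S0, A1, A3])
    · exact h
  have hDob : Lit.neg (Atom.Do Const.burn) ∈ S' := by
    have h := hall (r6 Const.burn) ⟨Or.inr (mem_r6 _), body_r6b_S0⟩
      ⟨by simp [r6, Set.singleton_subset_iff, hactb], by simp [r6]⟩
    rcases (by simpa [SatHead, r6, Set.inter_nonempty] using h :
      Lit.pos (Atom.Do Const.burn) ∈ S' ∨ Lit.neg (Atom.Do Const.burn) ∈ S') with h|h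
    · exact absurd (hsub h) (by simp [S0, A1, A3])
    · exact h
  have hDib : Lit.neg (Atom.Dia Const.burn) ∈ S' := by
    have h := hall (r4 Const.burn) ⟨Or.inr (mem_r4 _), body_r4b_S0⟩
      ⟨by simp [r4, Set.insert_subset_iff, hDob, hactb], by simp [r4]⟩
    simpa [SatHead, r4, Set.inter_nonempty] using h
  intro x hx
  simp [S0, A1, A3] at hx
  rcases hx with rfl|rfl|rfl|rfl|rfl|rfl|rfl|rfl|rfl|rfl <;> assumption

-- weak constraints of RossW
def c1 : WeakConstraint Const := ⟨{.pos (.O .mail)}, ∅, 1, 1⟩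
def c2 : WeakConstraint Const := ⟨{.pos (.F .mail)}, ∅, 1, 1⟩
def c3 : WeakConstraint Const := ⟨{.pos (.O .burn)}, ∅, 1, 1⟩
def c4 : WeakConstraint Const := ⟨{.pos (.F .burn)}, ∅, 1, 1⟩
def c5 : WeakConstraint Const := ⟨{.neg (.O .mail)}, ∅, 1, 2⟩

lemma rossW_eq : RossW = insert c1 (insert c2 (insert c3 (insert c4 {c5}))) := by decide

lemma violates_single (x : Lit Const) (w l : ℕ) (S : Set (Lit Const)) :
    Violates S ⟨{x}, ∅, w, l⟩ ↔ x ∈ S := by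
  simp [Violates]

open Classical in
lemma penalty_expand (S : Set (Lit Const)) (lvl : ℕ) :
    penalty RossW S lvl =
      (if c1.l = lvl ∧ Violates S c1 then c1.w else 0) +
      ((if c2.l = lvl ∧ Violates S c2 then c2.w else 0) +
      ((if c3.l = lvl ∧ Violates S c3 then c3.w else 0) +
      ((if c4.l = lvl ∧ Violates S c4 then c4.w else 0) +
      (if c5.l = lvl ∧ Violates S c5 then c5.w else 0)))) := by
  simp only [penalty]
  rw [rossW_eq, Finset.sum_insert (by decide), Finset.sum_insert (by decide),
    Finset.sum_insert (by decide), Finset.sum_insert (by decide), Finset.sum_singleton]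

lemma pen_high (S : Set (Lit Const)) (lvl : ℕ) (h : 2 < lvl) :
    penalty RossW S lvl = 0 := by
  have h1 : ¬ (c1.l = lvl ∧ Violates S c1) := by rintro ⟨hl, -⟩; simp [c1] at hl; omega
  have h2 : ¬ (c2.l = lvl ∧ Violates S c2) := by rintro ⟨hl, -⟩; simp [c2] at hl; omega
  have h3 : ¬ (c3.l = lvl ∧ Violates S c3) := by rintro ⟨hl, -⟩; simp [c3] at hl; omega
  have h4 : ¬ (c4.l = lvl ∧ Violates S c4) := by rintro ⟨hl, -⟩; simp [c4] at hl; omega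
  have h5 : ¬ (c5.l = lvl ∧ Violates S c5) := by rintro ⟨hl, -⟩; simp [c5] at hl; omega
  rw [penalty_expand, if_neg h1, if_neg h2, if_neg h3, if_neg h4, if_neg h5]

lemma pen2_zero {S : Set (Lit Const)} (h : Lit.neg (Atom.O Const.mail) ∉ S) :
    penalty RossW S 2 = 0 := by
  have h1 : ¬ (c1.l = 2 ∧ Violates S c1) := by rintro ⟨hl, -⟩; simp [c1] at hl
  have h2 : ¬ (c2.l = 2 ∧ Violates S c2) := by rintro ⟨hl, -⟩; simp [c2] at hl
  have h3 : ¬ (c3.l = 2 ∧ Violates S c3) := by rintro ⟨hl, -⟩; simp [c3] at hl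
  have h4 : ¬ (c4.l = 2 ∧ Violates S c4) := by rintro ⟨hl, -⟩; simp [c4] at hl
  have h5 : ¬ (c5.l = 2 ∧ Violates S c5) := by
    rintro ⟨-, hv⟩; exact h ((violates_single _ _ _ _).mp hv)
  rw [penalty_expand, if_neg h1, if_neg h2, if_neg h3, if_neg h4, if_neg h5]

lemma pen1_S0 : penalty RossW S0 1 = 1 := by
  have h1 : c1.l = 1 ∧ Violates S0 c1 :=
    ⟨rfl, (violates_single _ _ _ _).mpr (by simp [S0, A1, A3])⟩
  have h2 : ¬ (c2.l = 1 ∧ Violates S0 c2) := by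
    rintro ⟨-, hv⟩
    exact absurd ((violates_single _ _ _ _).mp hv) (by simp [S0, A1, A3])
  have h3 : ¬ (c3.l = 1 ∧ Violates S0 c3) := by
    rintro ⟨-, hv⟩
    exact absurd ((violates_single _ _ _ _).mp hv) (by simp [S0, A1, A3])
  have h4 : ¬ (c4.l = 1 ∧ Violates S0 c4) := by
    rintro ⟨-, hv⟩
    exact absurd ((violates_single _ _ _ _).mp hv) (by simp [S0, A1, A3])
  have h5 : ¬ (c5.l = 1 ∧ Violates S0 c5) := by rintro ⟨hl, -⟩; simp [c5] at hl
  rw [penalty_expand, if_pos h1, if_neg h2, if_neg h3, if_neg h4, if_neg h5]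
  simp [c1]

lemma pen2_S0 : penalty RossW S0 2 = 0 :=
  pen2_zero (by simp [S0, A1, A3])

lemma pen2_ge {S : Set (Lit Const)} (h : Lit.neg (Atom.O Const.mail) ∈ S) :
    1 ≤ penalty RossW S 2 := by
  have h5 : c5.l = 2 ∧ Violates S c5 := ⟨rfl, (violates_single _ _ _ _).mpr h⟩
  rw [penalty_expand, if_pos h5]
  simp only [show c5.w = 1 from rfl]
  omega

lemma pen1_ge {S : Set (Lit Const)} (h1 : Lit.pos (Atom.O Const.mail) ∈ S)
    (h2 : Lit.pos (Atom.O Const.burn) ∈ S) : 2 ≤ penalty RossW S 1 := by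
  have hc1 : c1.l = 1 ∧ Violates S c1 := ⟨rfl, (violates_single _ _ _ _).mpr h1⟩
  have hc3 : c3.l = 1 ∧ Violates S c3 := ⟨rfl, (violates_single _ _ _ _).mpr h2⟩
  rw [penalty_expand, if_pos hc1, if_pos hc3]
  simp only [show c1.w = 1 from rfl, show c3.w = 1 from rfl]
  omega

/-- every optimal answer set of the Ross program contains
O(mail) and Do(mail), and none contains O(burn). -/
theorem stmt14 :
    ∀ S : Set (Lit Const), IsOptimalAnswerSet RossProgram RossW S →
      Lit.pos (Atom.O Const.mail) ∈ S ∧ Lit.pos (Atom.Do Const.mail) ∈ S ∧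
        Lit.pos (Atom.O Const.burn) ∉ S := by
  intro S hS
  obtain ⟨hAS, hopt⟩ := hS
  have hact : Lit.pos (Atom.act Const.mail) ∈ S := by
    have h := head_of hAS (Or.inl (mem_rF Const.mail)) ⟨by simp [rF], by simp [rF]⟩
    simpa [SatHead, rF, Set.inter_nonempty] using h
  have hOm : Lit.pos (Atom.O Const.mail) ∈ S := by
    by_contra hO
    have h := head_of hAS (Or.inl (mem_r1 Const.mail))
      ⟨by simp [r1, Set.singleton_subset_iff, hact], by simp [r1]⟩
    have hnO : Lit.neg (Atom.O Const.mail) ∈ S := by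
      rcases (by simpa [SatHead, r1, Set.inter_nonempty] using h :
        Lit.pos (Atom.O Const.mail) ∈ S ∨ Lit.neg (Atom.O Const.mail) ∈ S) with h'|h'
      · exact absurd h' hO
      · exact h'
    refine hopt ⟨S0, 2, AS_S0, ?_, ?_⟩
    · rw [pen2_S0]
      exact lt_of_lt_of_le zero_lt_one (pen2_ge hnO)
    · intro l' hl'
      rw [pen_high _ _ hl', pen_high _ _ hl']
  have hnDia : Lit.neg (Atom.Dia Const.mail) ∉ S := by
    intro hd
    have h := head_of hAS (Or.inl (mem_r3 Const.mail))
      ⟨by simp [r3, Set.insert_subset_iff, hOm, hd], by simp [r3]⟩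
    simp [SatHead, r3] at h
  have hnDo : Lit.neg (Atom.Do Const.mail) ∉ S := by
    intro hd
    have h := head_of hAS (Or.inl (mem_r4 Const.mail))
      ⟨by simp [r4, Set.insert_subset_iff, hd, hact], by simp [r4]⟩
    exact hnDia (by simpa [SatHead, r4, Set.inter_nonempty] using h)
  have hDom : Lit.pos (Atom.Do Const.mail) ∈ S := by
    have h := head_of hAS (Or.inl (mem_r6 Const.mail))
      ⟨by simp [r6, Set.singleton_subset_iff, hact], by simp [r6]⟩
    rcases (by simpa [SatHead, r6, Set.inter_nonempty] using h :
      Lit.pos (Atom.Do Const.mail) ∈ S ∨ Lit.neg (Atom.Do Const.mail) ∈ S) with h'|h'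
    · exact h'
    · exact absurd h' hnDo
  refine ⟨hOm, hDom, ?_⟩
  intro hOb
  have hnOm : Lit.neg (Atom.O Const.mail) ∉ S := fun h => hAS.1 _ ⟨hOm, h⟩
  refine hopt ⟨S0, 1, AS_S0, ?_, ?_⟩
  · rw [pen1_S0]
    exact lt_of_lt_of_le one_lt_two (pen1_ge hOm hOb)
  · intro l' hl'
    rcases Nat.lt_or_ge l' 3 with h3|h3
    · have h2 : l' = 2 := by omega
      subst h2
      rw [pen2_S0, pen2_zero hnOm]
    · rw [pen_high _ _ (by omega), pen_high _ _ (by omega)]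


end ASP
end

section
/- The fence program with the cottage by the sea, (Π_F, W_F), has exactly two optimal answer sets, namely {act(have_fence), ¬O(have_fence), ¬F(have_fence), Do(have_fence), Happens(have_fence), Location(sea)} ∪ A3(have_white_fence) and the same set with A4(have_white_fence) in place of A3(have_white_fence); in particular, no optimal answer set contains the obligation O(have_white_fence), i.e., when the cottage is by the sea the fence need not be white. -/
namespace ASP

variable {C : Type}

variable [DecidableEq C]

/-- The fence program: CC(have_fence) ∪ CC(have_white_fence) together with
the facts Location(sea) and Do(have_fence). -/
def FenceProgram : Set (Rule Const) :=
  CC Const.have_fence ∪ CC Const.have_white_fence ∪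
    { ⟨{.pos (.Location .sea)}, ∅, ∅⟩,
      ⟨{.pos (.Do .have_fence)}, ∅, ∅⟩ }

/-- The weak constraints of the fence program. -/
def FenceW : Finset (WeakConstraint Const) :=
  WC Const.have_fence ∪ WC Const.have_white_fence ∪
    { ⟨{.neg (.F .have_fence)}, {.pos (.Location .sea)}, 1, 2⟩,
      ⟨{.pos (.Do .have_fence), .neg (.O .have_white_fence)},
        {.pos (.Location .sea)}, 1, 2⟩ }


/-- The common part of the two expected optimal answer sets. -/
def FenceB : Set (Lit Const) :=
  {.pos (.act .have_fence), .neg (.O .have_fence), .neg (.F .have_fence),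
   .pos (.Do .have_fence), .pos (.Happens .have_fence), .pos (.Location .sea)}


/-! ### Auxiliary definitions and lemmas -/

def T3 : Set (Lit Const) := FenceB ∪ A3 Const.have_white_fence
def T4 : Set (Lit Const) := FenceB ∪ A4 Const.have_white_fence

lemma head_single {S : Set (Lit Const)} {x : Lit Const} {p n : Set (Lit Const)}
    (h : SatHead S ⟨{x}, p, n⟩) : x ∈ S := by
  obtain ⟨y, hy1, hy2⟩ := h
  simp only [Set.mem_singleton_iff] at hy1
  subst hy1; exact hy2

lemma head_pair {S : Set (Lit Const)} {x z : Lit Const} {p n : Set (Lit Const)}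
    (h : SatHead S ⟨{x, z}, p, n⟩) : x ∈ S ∨ z ∈ S := by
  obtain ⟨y, hy1, hy2⟩ := h
  simp only [Set.mem_insert_iff, Set.mem_singleton_iff] at hy1
  rcases hy1 with rfl | rfl
  · exact Or.inl hy2
  · exact Or.inr hy2

lemma cons_T3 : Consistent T3 := by
  intro p hp
  obtain ⟨h1, h2⟩ := hp
  simp only [T3, FenceB, A3, Set.mem_union, Set.mem_insert_iff, Set.mem_singleton_iff] at h1 h2
  rcases h1 with (h1|h1|h1|h1|h1|h1)|h1|h1|h1|h1|h1 <;> simp_all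

lemma cons_T4 : Consistent T4 := by
  intro p hp
  obtain ⟨h1, h2⟩ := hp
  simp only [T4, FenceB, A4, Set.mem_union, Set.mem_insert_iff, Set.mem_singleton_iff] at h1 h2
  rcases h1 with (h1|h1|h1|h1|h1|h1)|h1|h1|h1|h1|h1 <;> simp_all

lemma head_T3 : ∀ r ∈ reduct FenceProgram T3, SatHead T3 r := by
  rintro r ⟨hrP, hb⟩
  simp only [FenceProgram, CC, Set.mem_union, Set.mem_insert_iff, Set.mem_singleton_iff] at hrP
  rcases hrP with ((rfl|rfl|rfl|rfl|rfl|rfl|rfl|rfl|rfl|rfl)|rfl|rfl|rfl|rfl|rfl|rfl|rfl|rfl|rfl|rfl)|rfl|rfl <;>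
    first
    | (exfalso; revert hb;
       simp [SatBody, T3, FenceB, A3, Set.insert_subset_iff, Set.singleton_subset_iff]; done)
    | (simp [SatHead, Set.inter_nonempty, T3, FenceB, A3]; done)

lemma head_T4 : ∀ r ∈ reduct FenceProgram T4, SatHead T4 r := by
  rintro r ⟨hrP, hb⟩
  simp only [FenceProgram, CC, Set.mem_union, Set.mem_insert_iff, Set.mem_singleton_iff] at hrP
  rcases hrP with ((rfl|rfl|rfl|rfl|rfl|rfl|rfl|rfl|rfl|rfl)|rfl|rfl|rfl|rfl|rfl|rfl|rfl|rfl|rfl|rfl)|rfl|rfl <;>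
    first
    | (exfalso; revert hb;
       simp [SatBody, T4, FenceB, A4, Set.insert_subset_iff, Set.singleton_subset_iff]; done)
    | (simp [SatHead, Set.inter_nonempty, T4, FenceB, A4]; done)


lemma mem_CC_act {C : Type} (a : C) : (⟨{.pos (.act a)}, ∅, ∅⟩ : Rule C) ∈ CC a :=
  Set.mem_insert _ _
lemma mem_CC_O {C : Type} (a : C) :
    (⟨{.pos (.O a), .neg (.O a)}, {.pos (.act a)}, ∅⟩ : Rule C) ∈ CC a :=
  Set.mem_insert_of_mem _ (Set.mem_insert _ _)
lemma mem_CC_F {C : Type} (a : C) :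
    (⟨{.pos (.F a), .neg (.F a)}, {.pos (.act a)}, ∅⟩ : Rule C) ∈ CC a :=
  Set.mem_insert_of_mem _ (Set.mem_insert_of_mem _ (Set.mem_insert _ _))
lemma mem_CC_Dia {C : Type} (a : C) :
    (⟨{.neg (.Dia a)}, {.neg (.Do a), .pos (.act a)}, ∅⟩ : Rule C) ∈ CC a :=
  Set.mem_insert_of_mem _ (Set.mem_insert_of_mem _ (Set.mem_insert_of_mem _
    (Set.mem_insert_of_mem _ (Set.mem_insert _ _))))
lemma mem_CC_Do {C : Type} (a : C) :
    (⟨{.pos (.Do a), .neg (.Do a)}, {.pos (.act a)}, ∅⟩ : Rule C) ∈ CC a :=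
  Set.mem_insert_of_mem _ (Set.mem_insert_of_mem _ (Set.mem_insert_of_mem _
    (Set.mem_insert_of_mem _ (Set.mem_insert_of_mem _ (Set.mem_insert_of_mem _
      (Set.mem_insert _ _))))))
lemma mem_CC_Happens {C : Type} (a : C) :
    (⟨{.pos (.Happens a)}, {.pos (.Do a)}, ∅⟩ : Rule C) ∈ CC a :=
  Set.mem_insert_of_mem _ (Set.mem_insert_of_mem _ (Set.mem_insert_of_mem _
    (Set.mem_insert_of_mem _ (Set.mem_insert_of_mem _ (Set.mem_insert_of_mem _
      (Set.mem_insert_of_mem _ (Set.mem_insert_of_mem _ (Set.mem_insert _ _))))))))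
lemma memF_f {r : Rule Const} (h : r ∈ CC Const.have_fence) : r ∈ FenceProgram :=
  Set.mem_union_left _ (Set.mem_union_left _ h)
lemma memF_w {r : Rule Const} (h : r ∈ CC Const.have_white_fence) : r ∈ FenceProgram :=
  Set.mem_union_left _ (Set.mem_union_right _ h)
lemma memF_loc : (⟨{.pos (.Location .sea)}, ∅, ∅⟩ : Rule Const) ∈ FenceProgram :=
  Set.mem_union_right _ (Set.mem_insert _ _)
lemma memF_dof : (⟨{.pos (.Do .have_fence)}, ∅, ∅⟩ : Rule Const) ∈ FenceProgram :=
  Set.mem_union_right _ (Set.mem_insert_of_mem _ rfl)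

lemma body0 {S H : Set (Lit Const)} : SatBody S ⟨H, ∅, ∅⟩ := ⟨by simp, by simp⟩

lemma body1 {S : Set (Lit Const)} {x : Lit Const} (hx : x ∈ S) {H : Set (Lit Const)} :
    SatBody S ⟨H, {x}, ∅⟩ := ⟨Set.singleton_subset_iff.mpr hx, by simp⟩

lemma body2 {S : Set (Lit Const)} {x z : Lit Const} (hx : x ∈ S) (hz : z ∈ S)
    {H : Set (Lit Const)} : SatBody S ⟨H, {x, z}, ∅⟩ :=
  ⟨Set.insert_subset_iff.mpr ⟨hx, Set.singleton_subset_iff.mpr hz⟩, by simp⟩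

lemma closed_T3 {S' : Set (Lit Const)} (hsub : S' ⊆ T3)
    (hall : ∀ r ∈ reduct FenceProgram T3, Satisfies S' r) : T3 ⊆ S' := by
  have hin : ∀ r : Rule Const, r ∈ FenceProgram → SatBody T3 r → Satisfies S' r :=
    fun r h1 h2 => hall r ⟨h1, h2⟩
  have hactf : Lit.pos (.act .have_fence) ∈ S' :=
    head_single (hin ⟨{.pos (.act .have_fence)}, ∅, ∅⟩ (memF_f (mem_CC_act _)) body0 body0)
  have hactw : Lit.pos (.act .have_white_fence) ∈ S' :=
    head_single (hin ⟨{.pos (.act .have_white_fence)}, ∅, ∅⟩ (memF_w (mem_CC_act _)) body0 body0)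
  have hloc : Lit.pos (.Location .sea) ∈ S' :=
    head_single (hin ⟨{.pos (.Location .sea)}, ∅, ∅⟩ memF_loc body0 body0)
  have hdof : Lit.pos (.Do .have_fence) ∈ S' :=
    head_single (hin ⟨{.pos (.Do .have_fence)}, ∅, ∅⟩ memF_dof body0 body0)
  have hhapf : Lit.pos (.Happens .have_fence) ∈ S' :=
    head_single (hin ⟨{.pos (.Happens .have_fence)}, {.pos (.Do .have_fence)}, ∅⟩
      (memF_f (mem_CC_Happens _)) (body1 (by simp [T3, FenceB, A3])) (body1 hdof))
  have hnOf : Lit.neg (.O .have_fence) ∈ S' := by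
    rcases head_pair (hin ⟨{.pos (.O .have_fence), .neg (.O .have_fence)},
        {.pos (.act .have_fence)}, ∅⟩ (memF_f (mem_CC_O _))
        (body1 (by simp [T3, FenceB, A3])) (body1 hactf)) with h | h
    · exact absurd (hsub h) (by simp [T3, FenceB, A3])
    · exact h
  have hnFf : Lit.neg (.F .have_fence) ∈ S' := by
    rcases head_pair (hin ⟨{.pos (.F .have_fence), .neg (.F .have_fence)},
        {.pos (.act .have_fence)}, ∅⟩ (memF_f (mem_CC_F _))
        (body1 (by simp [T3, FenceB, A3])) (body1 hactf)) with h | h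
    · exact absurd (hsub h) (by simp [T3, FenceB, A3])
    · exact h
  have hnOw : Lit.neg (.O .have_white_fence) ∈ S' := by
    rcases head_pair (hin ⟨{.pos (.O .have_white_fence), .neg (.O .have_white_fence)},
        {.pos (.act .have_white_fence)}, ∅⟩ (memF_w (mem_CC_O _))
        (body1 (by simp [T3, FenceB, A3])) (body1 hactw)) with h | h
    · exact absurd (hsub h) (by simp [T3, FenceB, A3])
    · exact h
  have hnFw : Lit.neg (.F .have_white_fence) ∈ S' := by
    rcases head_pair (hin ⟨{.pos (.F .have_white_fence), .neg (.F .have_white_fence)},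
        {.pos (.act .have_white_fence)}, ∅⟩ (memF_w (mem_CC_F _))
        (body1 (by simp [T3, FenceB, A3])) (body1 hactw)) with h | h
    · exact absurd (hsub h) (by simp [T3, FenceB, A3])
    · exact h
  have hnDow : Lit.neg (.Do .have_white_fence) ∈ S' := by
    rcases head_pair (hin ⟨{.pos (.Do .have_white_fence), .neg (.Do .have_white_fence)},
        {.pos (.act .have_white_fence)}, ∅⟩ (memF_w (mem_CC_Do _))
        (body1 (by simp [T3, FenceB, A3])) (body1 hactw)) with h | h
    · exact absurd (hsub h) (by simp [T3, FenceB, A3])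
    · exact h
  have hnDiaw : Lit.neg (.Dia .have_white_fence) ∈ S' :=
    head_single (hin ⟨{.neg (.Dia .have_white_fence)},
      {.neg (.Do .have_white_fence), .pos (.act .have_white_fence)}, ∅⟩
      (memF_w (mem_CC_Dia _))
      (body2 (by simp [T3, FenceB, A3]) (by simp [T3, FenceB, A3])) (body2 hnDow hactw))
  intro x hx
  simp only [T3, FenceB, A3, Set.mem_union, Set.mem_insert_iff, Set.mem_singleton_iff] at hx
  rcases hx with (rfl|rfl|rfl|rfl|rfl|rfl)|rfl|rfl|rfl|rfl|rfl
  exacts [hactf, hnOf, hnFf, hdof, hhapf, hloc, hactw, hnFw, hnOw, hnDow, hnDiaw]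

lemma closed_T4 {S' : Set (Lit Const)} (hsub : S' ⊆ T4)
    (hall : ∀ r ∈ reduct FenceProgram T4, Satisfies S' r) : T4 ⊆ S' := by
  have hin : ∀ r : Rule Const, r ∈ FenceProgram → SatBody T4 r → Satisfies S' r :=
    fun r h1 h2 => hall r ⟨h1, h2⟩
  have hactf : Lit.pos (.act .have_fence) ∈ S' :=
    head_single (hin ⟨{.pos (.act .have_fence)}, ∅, ∅⟩ (memF_f (mem_CC_act _)) body0 body0)
  have hactw : Lit.pos (.act .have_white_fence) ∈ S' :=
    head_single (hin ⟨{.pos (.act .have_white_fence)}, ∅, ∅⟩ (memF_w (mem_CC_act _)) body0 body0)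
  have hloc : Lit.pos (.Location .sea) ∈ S' :=
    head_single (hin ⟨{.pos (.Location .sea)}, ∅, ∅⟩ memF_loc body0 body0)
  have hdof : Lit.pos (.Do .have_fence) ∈ S' :=
    head_single (hin ⟨{.pos (.Do .have_fence)}, ∅, ∅⟩ memF_dof body0 body0)
  have hhapf : Lit.pos (.Happens .have_fence) ∈ S' :=
    head_single (hin ⟨{.pos (.Happens .have_fence)}, {.pos (.Do .have_fence)}, ∅⟩
      (memF_f (mem_CC_Happens _)) (body1 (by simp [T4, FenceB, A4])) (body1 hdof))
  have hnOf : Lit.neg (.O .have_fence) ∈ S' := by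
    rcases head_pair (hin ⟨{.pos (.O .have_fence), .neg (.O .have_fence)},
        {.pos (.act .have_fence)}, ∅⟩ (memF_f (mem_CC_O _))
        (body1 (by simp [T4, FenceB, A4])) (body1 hactf)) with h | h
    · exact absurd (hsub h) (by simp [T4, FenceB, A4])
    · exact h
  have hnFf : Lit.neg (.F .have_fence) ∈ S' := by
    rcases head_pair (hin ⟨{.pos (.F .have_fence), .neg (.F .have_fence)},
        {.pos (.act .have_fence)}, ∅⟩ (memF_f (mem_CC_F _))
        (body1 (by simp [T4, FenceB, A4])) (body1 hactf)) with h | h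
    · exact absurd (hsub h) (by simp [T4, FenceB, A4])
    · exact h
  have hnOw : Lit.neg (.O .have_white_fence) ∈ S' := by
    rcases head_pair (hin ⟨{.pos (.O .have_white_fence), .neg (.O .have_white_fence)},
        {.pos (.act .have_white_fence)}, ∅⟩ (memF_w (mem_CC_O _))
        (body1 (by simp [T4, FenceB, A4])) (body1 hactw)) with h | h
    · exact absurd (hsub h) (by simp [T4, FenceB, A4])
    · exact h
  have hnFw : Lit.neg (.F .have_white_fence) ∈ S' := by
    rcases head_pair (hin ⟨{.pos (.F .have_white_fence), .neg (.F .have_white_fence)},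
        {.pos (.act .have_white_fence)}, ∅⟩ (memF_w (mem_CC_F _))
        (body1 (by simp [T4, FenceB, A4])) (body1 hactw)) with h | h
    · exact absurd (hsub h) (by simp [T4, FenceB, A4])
    · exact h
  have hdow : Lit.pos (.Do .have_white_fence) ∈ S' := by
    rcases head_pair (hin ⟨{.pos (.Do .have_white_fence), .neg (.Do .have_white_fence)},
        {.pos (.act .have_white_fence)}, ∅⟩ (memF_w (mem_CC_Do _))
        (body1 (by simp [T4, FenceB, A4])) (body1 hactw)) with h | h
    · exact h
    · exact absurd (hsub h) (by simp [T4, FenceB, A4])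
  have hhapw : Lit.pos (.Happens .have_white_fence) ∈ S' :=
    head_single (hin ⟨{.pos (.Happens .have_white_fence)}, {.pos (.Do .have_white_fence)}, ∅⟩
      (memF_w (mem_CC_Happens _)) (body1 (by simp [T4, FenceB, A4])) (body1 hdow))
  intro x hx
  simp only [T4, FenceB, A4, Set.mem_union, Set.mem_insert_iff, Set.mem_singleton_iff] at hx
  rcases hx with (rfl|rfl|rfl|rfl|rfl|rfl)|rfl|rfl|rfl|rfl|rfl
  exacts [hactf, hnOf, hnFf, hdof, hhapf, hloc, hactw, hnFw, hnOw, hdow, hhapw]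

lemma isAS_T3 : IsAnswerSet FenceProgram T3 := by
  refine ⟨cons_T3, head_T3, fun S' hss hall => ?_⟩
  exact hss.not_subset (closed_T3 hss.subset hall)

lemma isAS_T4 : IsAnswerSet FenceProgram T4 := by
  refine ⟨cons_T4, head_T4, fun S' hss hall => ?_⟩
  exact hss.not_subset (closed_T4 hss.subset hall)

lemma sat_T3 : ∀ r ∈ FenceProgram, Satisfies T3 r := fun r hr hb => head_T3 r ⟨hr, hb⟩
lemma sat_T4 : ∀ r ∈ FenceProgram, Satisfies T4 r := fun r hr hb => head_T4 r ⟨hr, hb⟩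

lemma classify {S : Set (Lit Const)} (hAS : IsAnswerSet FenceProgram S)
    (hOf : Lit.pos (.O .have_fence) ∉ S) (hFf : Lit.pos (.F .have_fence) ∉ S)
    (hOw : Lit.pos (.O .have_white_fence) ∉ S) (hFw : Lit.pos (.F .have_white_fence) ∉ S) :
    S = T3 ∨ S = T4 := by
  obtain ⟨hcons, hhead, hmin⟩ := hAS
  have hin : ∀ r : Rule Const, r ∈ FenceProgram → SatBody S r → SatHead S r :=
    fun r h1 h2 => hhead r ⟨h1, h2⟩
  have hactf := head_single (hin _ (memF_f (mem_CC_act _)) body0)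
  have hactw := head_single (hin _ (memF_w (mem_CC_act _)) body0)
  have hloc := head_single (hin _ memF_loc body0)
  have hdof := head_single (hin _ memF_dof body0)
  have hhapf := head_single (hin _ (memF_f (mem_CC_Happens _)) (body1 hdof))
  have hnOf : Lit.neg (.O .have_fence) ∈ S := by
    rcases head_pair (hin _ (memF_f (mem_CC_O _)) (body1 hactf)) with h | h
    · exact absurd h hOf
    · exact h
  have hnFf : Lit.neg (.F .have_fence) ∈ S := by
    rcases head_pair (hin _ (memF_f (mem_CC_F _)) (body1 hactf)) with h | h
    · exact absurd h hFf
    · exact h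
  have hnOw : Lit.neg (.O .have_white_fence) ∈ S := by
    rcases head_pair (hin _ (memF_w (mem_CC_O _)) (body1 hactw)) with h | h
    · exact absurd h hOw
    · exact h
  have hnFw : Lit.neg (.F .have_white_fence) ∈ S := by
    rcases head_pair (hin _ (memF_w (mem_CC_F _)) (body1 hactw)) with h | h
    · exact absurd h hFw
    · exact h
  rcases head_pair (hin _ (memF_w (mem_CC_Do _)) (body1 hactw)) with hdow | hndow
  · right
    have hhapw := head_single (hin _ (memF_w (mem_CC_Happens _)) (body1 hdow))
    have hsub : T4 ⊆ S := by
      intro x hx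
      simp only [T4, FenceB, A4, Set.mem_union, Set.mem_insert_iff, Set.mem_singleton_iff] at hx
      rcases hx with (rfl|rfl|rfl|rfl|rfl|rfl)|rfl|rfl|rfl|rfl|rfl
      exacts [hactf, hnOf, hnFf, hdof, hhapf, hloc, hactw, hnFw, hnOw, hdow, hhapw]
    by_contra hne
    exact hmin T4 (Set.ssubset_iff_subset_ne.mpr ⟨hsub, fun h => hne h.symm⟩)
      (fun r hr => sat_T4 r hr.1)
  · left
    have hnDiaw := head_single (hin _ (memF_w (mem_CC_Dia _)) (body2 hndow hactw))
    have hsub : T3 ⊆ S := by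
      intro x hx
      simp only [T3, FenceB, A3, Set.mem_union, Set.mem_insert_iff, Set.mem_singleton_iff] at hx
      rcases hx with (rfl|rfl|rfl|rfl|rfl|rfl)|rfl|rfl|rfl|rfl|rfl
      exacts [hactf, hnOf, hnFf, hdof, hhapf, hloc, hactw, hnFw, hnOw, hndow, hnDiaw]
    by_contra hne
    exact hmin T3 (Set.ssubset_iff_subset_ne.mpr ⟨hsub, fun h => hne h.symm⟩)
      (fun r hr => sat_T3 r hr.1)

lemma mem_FenceW {c : WeakConstraint Const} :
    c ∈ FenceW ↔ c = ⟨{.pos (.O .have_fence)}, ∅, 1, 1⟩ ∨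
      c = ⟨{.pos (.F .have_fence)}, ∅, 1, 1⟩ ∨
      c = ⟨{.pos (.O .have_white_fence)}, ∅, 1, 1⟩ ∨
      c = ⟨{.pos (.F .have_white_fence)}, ∅, 1, 1⟩ ∨
      c = ⟨{.neg (.F .have_fence)}, {.pos (.Location .sea)}, 1, 2⟩ ∨
      c = ⟨{.pos (.Do .have_fence), .neg (.O .have_white_fence)},
        {.pos (.Location .sea)}, 1, 2⟩ := by
  simp only [FenceW, WC, Finset.mem_union, Finset.mem_insert, Finset.mem_singleton]
  tauto

lemma penalty_T3 (lvl : ℕ) : penalty FenceW T3 lvl = 0 := by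
  simp only [penalty]
  refine Finset.sum_eq_zero fun c hc => ?_
  rw [mem_FenceW] at hc
  rcases hc with rfl|rfl|rfl|rfl|rfl|rfl <;>
    simp [Violates, T3, FenceB, A3, Set.singleton_inter_eq_empty, Set.insert_subset_iff]

lemma penalty_T4 (lvl : ℕ) : penalty FenceW T4 lvl = 0 := by
  simp only [penalty]
  refine Finset.sum_eq_zero fun c hc => ?_
  rw [mem_FenceW] at hc
  rcases hc with rfl|rfl|rfl|rfl|rfl|rfl <;>
    simp [Violates, T4, FenceB, A4, Set.singleton_inter_eq_empty, Set.insert_subset_iff]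

lemma penalty_ne_one {S : Set (Lit Const)} (hloc : Lit.pos (.Location .sea) ∈ S)
    {l : ℕ} (hl : l ≠ 1) : penalty FenceW S l = 0 := by
  simp only [penalty]
  refine Finset.sum_eq_zero fun c hc => ?_
  rw [mem_FenceW] at hc
  rcases hc with rfl|rfl|rfl|rfl|rfl|rfl <;>
    simp [Violates, Set.singleton_inter_eq_empty, hloc, Ne.symm hl]

lemma penalty_pos_of_mem {S : Set (Lit Const)} {c : WeakConstraint Const}
    (hc : c ∈ FenceW) (hl : c.l = 1) (hw : c.w ≠ 0) (hv : Violates S c) :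
    penalty FenceW S 1 ≠ 0 := by
  intro h0
  simp only [penalty] at h0
  have h := (Finset.sum_eq_zero_iff).mp h0 c hc
  rw [if_pos ⟨hl, hv⟩] at h
  exact hw h

lemma main_iff (S : Set (Lit Const)) :
    IsOptimalAnswerSet FenceProgram FenceW S ↔ (S = T3 ∨ S = T4) := by
  constructor
  · rintro ⟨hAS, hno⟩
    have hloc : Lit.pos (.Location .sea) ∈ S :=
      head_single (hAS.2.1 _ ⟨memF_loc, body0⟩)
    have key : ∀ c : WeakConstraint Const, c ∈ FenceW → c.l = 1 → c.w ≠ 0 →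
        ¬ Violates S c := by
      intro c hc hl hw hv
      exact hno ⟨T3, 1, isAS_T3,
        by rw [penalty_T3]; exact Nat.pos_of_ne_zero (penalty_pos_of_mem hc hl hw hv),
        fun l' hl' => by rw [penalty_T3, penalty_ne_one hloc (by omega : l' ≠ 1)]⟩
    have hOf : Lit.pos (.O .have_fence) ∉ S := fun h =>
      key ⟨{.pos (.O .have_fence)}, ∅, 1, 1⟩ (by simp [mem_FenceW]) rfl (by simp)
        ⟨by simp [h], by simp⟩
    have hFf : Lit.pos (.F .have_fence) ∉ S := fun h =>
      key ⟨{.pos (.F .have_fence)}, ∅, 1, 1⟩ (by simp [mem_FenceW]) rfl (by simp)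
        ⟨by simp [h], by simp⟩
    have hOw : Lit.pos (.O .have_white_fence) ∉ S := fun h =>
      key ⟨{.pos (.O .have_white_fence)}, ∅, 1, 1⟩ (by simp [mem_FenceW]) rfl (by simp)
        ⟨by simp [h], by simp⟩
    have hFw : Lit.pos (.F .have_white_fence) ∉ S := fun h =>
      key ⟨{.pos (.F .have_white_fence)}, ∅, 1, 1⟩ (by simp [mem_FenceW]) rfl (by simp)
        ⟨by simp [h], by simp⟩
    exact classify hAS hOf hFf hOw hFw
  · rintro (rfl | rfl)
    · refine ⟨isAS_T3, ?_⟩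
      rintro ⟨S', lvl, _, hlt, _⟩
      rw [penalty_T3] at hlt
      omega
    · refine ⟨isAS_T4, ?_⟩
      rintro ⟨S', lvl, _, hlt, _⟩
      rw [penalty_T4] at hlt
      omega

/-- the fence program with the cottage by the sea has exactly
two optimal answer sets, B ∪ A3(have_white_fence) and B ∪ A4(have_white_fence);
in particular no optimal answer set contains O(have_white_fence). -/
theorem stmt18 :
    (∀ S : Set (Lit Const), IsOptimalAnswerSet FenceProgram FenceW S ↔
      (S = FenceB ∪ A3 Const.have_white_fence ∨
        S = FenceB ∪ A4 Const.have_white_fence)) ∧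
    (∀ S : Set (Lit Const), IsOptimalAnswerSet FenceProgram FenceW S →
      Lit.pos (Atom.O Const.have_white_fence) ∉ S) := by
  refine ⟨fun S => main_iff S, fun S h hmem => ?_⟩
  rcases (main_iff S).mp h with rfl | rfl
  · simp [T3, FenceB, A3] at hmem
  · simp [T4, FenceB, A4] at hmem


end ASP
end
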